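/- arXiv:2509.12119 — 4 statements merged into one kernel-verified Lean document; each statement's English description precedes it below -/
import Mathlib

section
/- Suppose the conditional cdf F_s is a continuous function of a for every s ∈ 𝓢. Then the adjusted variable Ã(ω) := q(F_{S(ω)}(A(ω))) is statistically independent of S (where q, defined on (0,1), is applied to U := F_S(A), which lies in (0,1) almost surely; the value of Ã on the null event {U ∈ {0,1}} is set arbitrarily). -/
open MeasureTheory ProbabilityTheory Set Filter
open scoped ENNReal Topology

set_option linter.unusedSectionVars false

section Aux

variable {Ω : Type*} [MeasurableSpace Ω] (μ : Measure Ω) [IsProbabilityMeasure μ]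
  (A : Ω → ℝ) (hA : Measurable A) (E : Set Ω) (hE : MeasurableSet E) (hE0 : μ E ≠ 0)
  (G : ℝ → ℝ) (hG : ∀ a, G a = (μ ({ω | A ω ≤ a} ∩ E)).toReal / (μ E).toReal)
  (hGc : Continuous G)

include μ A hA E hE hE0 G hG

lemma aux_meas_eq : ∀ a, μ ({ω | A ω ≤ a} ∩ E) = ENNReal.ofReal (G a) * μ E := by
  intro a
  have hEfin : μ E ≠ ∞ := measure_ne_top μ E
  have hEpos : 0 < (μ E).toReal := ENNReal.toReal_pos hE0 hEfin
  rw [hG a, ENNReal.ofReal_div_of_pos hEpos, ENNReal.ofReal_toReal hEfin,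
    ENNReal.ofReal_toReal (measure_ne_top μ _), ENNReal.div_mul_cancel hE0 hEfin]

lemma aux_mono : Monotone G := by
  intro a b hab
  rw [hG a, hG b]
  have h1 : μ ({ω | A ω ≤ a} ∩ E) ≤ μ ({ω | A ω ≤ b} ∩ E) :=
    measure_mono (inter_subset_inter_left _ (fun ω h => le_trans h hab))
  have h2 : (μ ({ω | A ω ≤ a} ∩ E)).toReal ≤ (μ ({ω | A ω ≤ b} ∩ E)).toReal :=
    ENNReal.toReal_mono (measure_ne_top μ _) h1
  gcongr

lemma aux_nonneg : ∀ a, 0 ≤ G a := by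
  intro a; rw [hG a]; positivity

lemma aux_le_one : ∀ a, G a ≤ 1 := by
  intro a
  have hEfin : μ E ≠ ∞ := measure_ne_top μ E
  have hEpos : 0 < (μ E).toReal := ENNReal.toReal_pos hE0 hEfin
  rw [hG a, div_le_one hEpos]
  exact ENNReal.toReal_mono hEfin (measure_mono inter_subset_right)

lemma aux_lt : ∀ t : ℝ, 0 < t → ∃ a, G a < t := by
  intro t ht
  have hmeas : ∀ n : ℕ, NullMeasurableSet ({ω | A ω ≤ -(n:ℝ)} ∩ E) μ :=
    fun n => ((hA measurableSet_Iic).inter hE).nullMeasurableSet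
  have hanti : Antitone (fun n : ℕ => ({ω | A ω ≤ -(n:ℝ)} ∩ E)) := by
    intro n m hnm
    refine inter_subset_inter_left _ (fun ω h => ?_)
    simp only [mem_setOf_eq] at h ⊢
    have : (n:ℝ) ≤ (m:ℝ) := by exact_mod_cast hnm
    linarith
  have hempty : (⋂ n : ℕ, ({ω | A ω ≤ -(n:ℝ)} ∩ E)) = ∅ := by
    ext ω
    simp only [mem_iInter, mem_inter_iff, mem_setOf_eq, mem_empty_iff_false, iff_false, not_forall]
    obtain ⟨n, hn⟩ := exists_nat_gt (-A ω)
    exact ⟨n, fun ⟨h1, _⟩ => absurd h1 (by linarith)⟩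
  have htend : Tendsto (fun n : ℕ => μ ({ω | A ω ≤ -(n:ℝ)} ∩ E)) atTop (𝓝 0) := by
    have := tendsto_measure_iInter_atTop hmeas hanti ⟨0, measure_ne_top μ _⟩
    rwa [hempty, measure_empty] at this
  have htendR : Tendsto (fun n : ℕ => G (-(n:ℝ))) atTop (𝓝 0) := by
    have h1 : Tendsto (fun n : ℕ => (μ ({ω | A ω ≤ -(n:ℝ)} ∩ E)).toReal) atTop (𝓝 0) := by
      have := (ENNReal.tendsto_toReal (by simp : (0:ℝ≥0∞) ≠ ∞)).comp htend
      simpa [Function.comp_def] using this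
    have := h1.div_const (μ E).toReal
    simpa [hG, zero_div] using this
  obtain ⟨n, hn⟩ := (htendR.eventually_lt_const ht).exists
  exact ⟨-(n:ℝ), hn⟩

lemma aux_gt : ∀ t : ℝ, t < 1 → ∃ a, t < G a := by
  intro t ht
  have hmono : Monotone (fun n : ℕ => ({ω | A ω ≤ (n:ℝ)} ∩ E)) := by
    intro n m hnm
    refine inter_subset_inter_left _ (fun ω h => ?_)
    simp only [mem_setOf_eq] at h ⊢
    have : (n:ℝ) ≤ (m:ℝ) := by exact_mod_cast hnm
    linarith
  have hunion : (⋃ n : ℕ, ({ω | A ω ≤ (n:ℝ)} ∩ E)) = E := by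
    ext ω
    simp only [mem_iUnion, mem_inter_iff, mem_setOf_eq]
    constructor
    · rintro ⟨n, _, h⟩; exact h
    · intro h
      obtain ⟨n, hn⟩ := exists_nat_gt (A ω)
      exact ⟨n, le_of_lt hn, h⟩
  have htend : Tendsto (fun n : ℕ => μ ({ω | A ω ≤ (n:ℝ)} ∩ E)) atTop (𝓝 (μ E)) := by
    have := tendsto_measure_iUnion_atTop (μ := μ) hmono
    rwa [hunion] at this
  have htendR : Tendsto (fun n : ℕ => G ((n:ℝ))) atTop (𝓝 1) := by
    have h1 : Tendsto (fun n : ℕ => (μ ({ω | A ω ≤ (n:ℝ)} ∩ E)).toReal) atTop (𝓝 (μ E).toReal) := by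
      exact (ENNReal.tendsto_toReal (measure_ne_top μ E)).comp htend
    have h2 := h1.div_const (μ E).toReal
    have hEpos : 0 < (μ E).toReal := ENNReal.toReal_pos hE0 (measure_ne_top μ E)
    rw [div_self (ne_of_gt hEpos)] at h2
    simpa [hG] using h2
  obtain ⟨n, hn⟩ := (htendR.eventually_const_lt ht).exists
  exact ⟨(n:ℝ), hn⟩

include hGc

lemma aux_mid : ∀ t : ℝ, 0 < t → t < 1 →
    μ ({ω | G (A ω) ≤ t} ∩ E) = ENNReal.ofReal t * μ E := by
  intro t ht0 ht1
  obtain ⟨a₀, ha₀⟩ := aux_lt μ A hA E hE hE0 G hG t ht0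
  obtain ⟨a₁, ha₁⟩ := aux_gt μ A hA E hE hE0 G hG t ht1
  have hmono := aux_mono μ A hA E hE hE0 G hG
  set T : Set ℝ := {a | G a ≤ t} with hT
  have hTne : T.Nonempty := ⟨a₀, le_of_lt ha₀⟩
  have hTbdd : BddAbove T := by
    refine ⟨a₁, fun y hy => ?_⟩
    by_contra hcon
    push_neg at hcon
    have hy' : G y ≤ t := hy
    have := hmono (le_of_lt hcon)
    linarith
  have hTclosed : IsClosed T := isClosed_Iic.preimage hGc
  set a' := sSup T with ha'
  have ha'T : a' ∈ T := hTclosed.csSup_mem hTne hTbdd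
  have ha01 : a₀ ≤ a₁ := by
    by_contra hcon
    push_neg at hcon
    have := hmono (le_of_lt hcon)
    linarith
  obtain ⟨a, -, hGa⟩ := intermediate_value_Icc ha01 hGc.continuousOn
    (⟨le_of_lt ha₀, le_of_lt ha₁⟩ : t ∈ Icc (G a₀) (G a₁))
  have haT : a ∈ T := hGa.le
  have hGa' : G a' = t := le_antisymm ha'T (hGa ▸ hmono (le_csSup hTbdd haT))
  have hseteq : {ω | G (A ω) ≤ t} = {ω | A ω ≤ a'} := by
    ext ω
    simp only [mem_setOf_eq]
    constructor
    · intro h; exact le_csSup hTbdd h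
    · intro h; calc G (A ω) ≤ G a' := hmono h
        _ = t := hGa'
  rw [hseteq, aux_meas_eq μ A hA E hE hE0 G hG, hGa']

lemma aux_zero : μ ({ω | G (A ω) ≤ 0} ∩ E) = 0 := by
  have hb : ∀ n : ℕ, μ ({ω | G (A ω) ≤ 0} ∩ E) ≤ ENNReal.ofReal (1/(n+2)) * μ E := by
    intro n
    have h1 : (0:ℝ) < 1/(n+2) := by positivity
    have h2 : (1:ℝ)/(n+2) < 1 := by
      rw [div_lt_one (by positivity)]
      have : (0:ℝ) ≤ n := Nat.cast_nonneg n
      linarith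
    rw [← aux_mid μ A hA E hE hE0 G hG hGc _ h1 h2]
    exact measure_mono (inter_subset_inter_left _ (fun ω h => le_trans h (le_of_lt h1)))
  have htend : Tendsto (fun n : ℕ => ENNReal.ofReal (1/(n+2)) * μ E) atTop (𝓝 0) := by
    have h1 : Tendsto (fun n : ℕ => (1:ℝ)/(n+2)) atTop (𝓝 0) := by
      have : Tendsto (fun n : ℕ => ((n:ℝ)+2)) atTop atTop :=
        tendsto_atTop_add_const_right _ _ tendsto_natCast_atTop_atTop
      simpa [one_div, Pi.inv_def] using this.inv_tendsto_atTop
    have h2 : Tendsto (fun n : ℕ => ENNReal.ofReal (1/(n+2))) atTop (𝓝 0) := by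
      have := (ENNReal.continuous_ofReal.tendsto 0).comp h1
      simpa [Function.comp_def] using this
    have := ENNReal.Tendsto.mul_const h2 (Or.inr (measure_ne_top μ E))
    simpa using this
  have := ge_of_tendsto htend (Eventually.of_forall hb)
  exact le_antisymm this (by simp)

lemma aux_uniform : ∀ t : ℝ, 0 ≤ t → t ≤ 1 →
    μ ({ω | G (A ω) ≤ t} ∩ E) = ENNReal.ofReal t * μ E := by
  intro t ht0 ht1
  rcases eq_or_lt_of_le ht0 with h0 | h0
  · rw [← h0]
    simpa using aux_zero μ A hA E hE hE0 G hG hGc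
  rcases eq_or_lt_of_le ht1 with h1 | h1
  · have : {ω | G (A ω) ≤ t} ∩ E = E := by
      refine inter_eq_right.mpr (fun ω _ => ?_)
      simp only [mem_setOf_eq]
      rw [h1]
      exact aux_le_one μ A hA E hE hE0 G hG (A ω)
    rw [this, h1]
    simp
  exact aux_mid μ A hA E hE hE0 G hG hGc t h0 h1

lemma aux_null_top : μ ({ω | 1 ≤ G (A ω)} ∩ E) = 0 := by
  have key : ∀ n : ℕ, μ ({ω | 1 ≤ G (A ω)} ∩ E) + ENNReal.ofReal (1 - 1/(n+2)) * μ E ≤ μ E := by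
    intro n
    have h1 : (0:ℝ) < 1/(n+2) := by positivity
    have h2 : (1:ℝ)/(n+2) < 1 := by
      rw [div_lt_one (by positivity)]
      have : (0:ℝ) ≤ n := Nat.cast_nonneg n
      linarith
    have hmid := aux_mid μ A hA E hE hE0 G hG hGc (1 - 1/(n+2)) (by linarith) (by linarith)
    rw [← hmid]
    have hdisj : Disjoint ({ω | 1 ≤ G (A ω)} ∩ E) ({ω | G (A ω) ≤ 1 - 1/(n+2)} ∩ E) := by
      rw [Set.disjoint_left]
      rintro ω ⟨h3, -⟩ ⟨h4, -⟩
      simp only [mem_setOf_eq] at h3 h4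
      linarith
    have hmeasB : MeasurableSet ({ω | G (A ω) ≤ 1 - 1/(n+2)} ∩ E) :=
      ((hGc.measurable.comp hA) measurableSet_Iic).inter hE
    rw [← measure_union hdisj hmeasB]
    exact measure_mono (union_subset inter_subset_right inter_subset_right)
  have htend : Tendsto (fun n : ℕ => μ ({ω | 1 ≤ G (A ω)} ∩ E) + ENNReal.ofReal (1 - 1/(n+2)) * μ E)
      atTop (𝓝 (μ ({ω | 1 ≤ G (A ω)} ∩ E) + μ E)) := by
    have h1 : Tendsto (fun n : ℕ => (1:ℝ) - 1/(n+2)) atTop (𝓝 1) := by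
      have : Tendsto (fun n : ℕ => ((n:ℝ)+2)) atTop atTop :=
        tendsto_atTop_add_const_right _ _ tendsto_natCast_atTop_atTop
      have h := this.inv_tendsto_atTop
      have := h.const_sub (1:ℝ)
      simpa [one_div] using this
    have h2 : Tendsto (fun n : ℕ => ENNReal.ofReal (1 - 1/(n+2))) atTop (𝓝 1) := by
      have := (ENNReal.continuous_ofReal.tendsto 1).comp h1
      simpa [Function.comp_def] using this
    have h3 := ENNReal.Tendsto.mul_const h2 (Or.inr (measure_ne_top μ E))
    rw [one_mul] at h3
    exact h3.const_add _
  have hle := le_of_tendsto htend (Eventually.of_forall key)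
  have := ENNReal.le_of_add_le_add_right (measure_ne_top μ E) (hle.trans_eq (zero_add (μ E)).symm)
  exact le_antisymm this (by simp)

lemma aux_galois : ∀ p : ℝ, 0 < p → p < 1 → ∀ x : ℝ, (sInf {y | p ≤ G y} ≤ x ↔ p ≤ G x) := by
  intro p hp0 hp1 x
  have hmono := aux_mono μ A hA E hE hE0 G hG
  set T : Set ℝ := {y | p ≤ G y} with hT
  obtain ⟨y₁, hy₁⟩ := aux_gt μ A hA E hE hE0 G hG p hp1
  obtain ⟨y₀, hy₀⟩ := aux_lt μ A hA E hE hE0 G hG p hp0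
  have hTne : T.Nonempty := ⟨y₁, le_of_lt hy₁⟩
  have hTbdd : BddBelow T := by
    refine ⟨y₀, fun y hy => ?_⟩
    by_contra hcon
    push_neg at hcon
    have := hmono (le_of_lt hcon)
    simp only [hT, mem_setOf_eq] at hy
    linarith
  have hTclosed : IsClosed T := isClosed_Ici.preimage hGc
  have hinfT : sInf T ∈ T := hTclosed.csInf_mem hTne hTbdd
  constructor
  · intro h
    exact le_trans hinfT (hmono h)
  · intro h
    exact csInf_le hTbdd h

end Aux

/-- Paper's Lemma 2: the MQ-adjusted variable `Ã = F_A^{-1}(F_{A|S}(A, S))` is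
statistically independent of the sensitive attribute `S`. Here `q` is the quantile
function of the marginal cdf `FA`, and `Atil` is any random variable that coincides
with `q (F (S ω) (A ω))` whenever `F (S ω) (A ω) ∈ (0,1)` (its value on the
complementary null event is arbitrary). -/
theorem mq_adjustment_independent_of_sensitive
    {Ω : Type*} [MeasurableSpace Ω] (μ : Measure Ω) [IsProbabilityMeasure μ]
    {𝓢 : Type*} [Fintype 𝓢] [MeasurableSpace 𝓢] [MeasurableSingletonClass 𝓢]
    (S : Ω → 𝓢) (hS : Measurable S)
    (hpos : ∀ s : 𝓢, μ {ω | S ω = s} ≠ 0)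
    (A : Ω → ℝ) (hA : Measurable A)
    (F : 𝓢 → ℝ → ℝ)
    (hF : ∀ (s : 𝓢) (a : ℝ),
      F s a = (μ {ω | A ω ≤ a ∧ S ω = s}).toReal / (μ {ω | S ω = s}).toReal)
    (hcont : ∀ s : 𝓢, Continuous (F s))
    (FA : ℝ → ℝ) (hFA : ∀ a : ℝ, FA a = (μ {ω | A ω ≤ a}).toReal)
    (q : ℝ → ℝ) (hq : ∀ p ∈ Set.Ioo (0:ℝ) 1, q p = sInf {x : ℝ | p ≤ FA x})
    (Atil : Ω → ℝ)
    (hAtil : ∀ ω, F (S ω) (A ω) ∈ Set.Ioo (0:ℝ) 1 → Atil ω = q (F (S ω) (A ω))) :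
    IndepFun Atil S μ := by
  classical
  -- notation
  set E : 𝓢 → Set Ω := fun s => {ω | S ω = s} with hEdef
  have hEm : ∀ s : 𝓢, MeasurableSet (E s) := fun s => hS (measurableSet_singleton s)
  have hGs : ∀ s a, F s a = (μ ({ω | A ω ≤ a} ∩ E s)).toReal / (μ (E s)).toReal := by
    intro s a
    exact hF s a
  have hunivne : μ (univ : Set Ω) ≠ 0 := by simp
  have hGA : ∀ a, FA a = (μ ({ω | A ω ≤ a} ∩ (univ : Set Ω))).toReal / (μ (univ : Set Ω)).toReal := by
    intro a
    rw [hFA a, Set.inter_univ, measure_univ]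
    simp
  -- partition over s
  have hpart : ∀ X : Set Ω, MeasurableSet X → μ X = ∑ s : 𝓢, μ (X ∩ E s) := by
    intro X hX
    have hXeq : X = ⋃ s ∈ (Finset.univ : Finset 𝓢), X ∩ E s := by
      ext ω
      simp [hEdef]
    conv_lhs => rw [hXeq]
    exact measure_biUnion_finset
      (fun a _ b _ hab => Set.disjoint_left.mpr
        (fun ω ⟨_, ha⟩ ⟨_, hb⟩ => hab (ha.symm.trans hb)))
      (fun s _ => hX.inter (hEm s))
  have hsum1 : ∑ s : 𝓢, μ (E s) = 1 := by
    have := hpart univ MeasurableSet.univ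
    rw [measure_univ] at this
    simp only [Set.univ_inter] at this
    exact this.symm
  -- continuity of FA
  have hFAc : Continuous FA := by
    have hFAsum : FA = fun a => ∑ s : 𝓢, F s a * (μ (E s)).toReal := by
      funext a
      rw [hFA a, hpart {ω | A ω ≤ a} (hA measurableSet_Iic)]
      rw [ENNReal.toReal_sum (fun s _ => measure_ne_top μ _)]
      refine Finset.sum_congr rfl (fun s _ => ?_)
      rw [aux_meas_eq μ A hA (E s) (hEm s) (hpos s) (F s) (hGs s) a,
        ENNReal.toReal_mul, ENNReal.toReal_ofReal
          (aux_nonneg μ A hA (E s) (hEm s) (hpos s) (F s) (hGs s) a)]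
    rw [hFAsum]
    exact continuous_finset_sum _ (fun s _ => (hcont s).mul continuous_const)
  have hFA0 : ∀ x, 0 ≤ FA x := aux_nonneg μ A hA univ MeasurableSet.univ hunivne FA hGA
  have hFA1 : ∀ x, FA x ≤ 1 := aux_le_one μ A hA univ MeasurableSet.univ hunivne FA hGA
  have hq' : ∀ p ∈ Set.Ioo (0:ℝ) 1, ∀ x, (q p ≤ x ↔ p ≤ FA x) := by
    intro p hp x
    rw [hq p hp]
    exact aux_galois μ A hA univ MeasurableSet.univ hunivne FA hGA hFAc p hp.1 hp.2 x
  -- measurability of U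
  have Umeas : Measurable (fun ω => F (S ω) (A ω)) := by
    have hrep : (fun ω => F (S ω) (A ω)) = fun ω => ∑ s : 𝓢, if S ω = s then F s (A ω) else 0 := by
      funext ω
      simp
    rw [hrep]
    exact Finset.measurable_sum _ (fun s _ =>
      Measurable.ite (hS (measurableSet_singleton s)) ((hcont s).measurable.comp hA)
        measurable_const)
  -- per-s null sets
  have hNs : ∀ s : 𝓢, μ ({ω | F s (A ω) ∉ Set.Ioo (0:ℝ) 1} ∩ E s) = 0 := by
    intro s
    have hnull0 : μ ({ω | F s (A ω) ≤ 0} ∩ E s) = 0 :=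
      aux_zero μ A hA (E s) (hEm s) (hpos s) (F s) (hGs s) (hcont s)
    have hnull1 : μ ({ω | 1 ≤ F s (A ω)} ∩ E s) = 0 :=
      aux_null_top μ A hA (E s) (hEm s) (hpos s) (F s) (hGs s) (hcont s)
    refine measure_mono_null ?_ (measure_union_null hnull0 hnull1)
    rintro ω ⟨hno, hEs⟩
    simp only [Set.mem_Ioo, not_and, not_lt, Set.mem_setOf_eq] at hno
    rcases le_or_gt (F s (A ω)) 0 with h | h
    · exact Or.inl ⟨h, hEs⟩
    · exact Or.inr ⟨hno h, hEs⟩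
  have hNtotal : μ {ω | F (S ω) (A ω) ∉ Set.Ioo (0:ℝ) 1} = 0 := by
    have hXm : MeasurableSet {ω | F (S ω) (A ω) ∉ Set.Ioo (0:ℝ) 1} :=
      (Umeas measurableSet_Ioo).compl
    rw [hpart _ hXm]
    refine Finset.sum_eq_zero (fun s _ => ?_)
    refine measure_mono_null ?_ (hNs s)
    rintro ω ⟨hno, hEs⟩
    have hss : S ω = s := hEs
    simp only [Set.mem_setOf_eq] at hno ⊢
    rw [hss] at hno
    exact ⟨hno, hEs⟩
  -- measurable version of Atil
  set At : Ω → ℝ :=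
    (fun ω => if F (S ω) (A ω) ∈ Set.Ioo (0:ℝ) 1 then q (F (S ω) (A ω)) else 0) with hAtdef
  have hAtle : ∀ ω x, At ω ≤ x ↔
      ((F (S ω) (A ω) ∈ Set.Ioo (0:ℝ) 1 ∧ F (S ω) (A ω) ≤ FA x) ∨
        (F (S ω) (A ω) ∉ Set.Ioo (0:ℝ) 1 ∧ 0 ≤ x)) := by
    intro ω x
    by_cases hm : F (S ω) (A ω) ∈ Set.Ioo (0:ℝ) 1
    · rw [hAtdef]
      simp only
      rw [if_pos hm, hq' _ hm x]
      simp [hm]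
    · rw [hAtdef]
      simp only
      rw [if_neg hm]
      simp [hm]
  have hAtmeas : Measurable At := by
    apply measurable_of_Iic
    intro x
    have hpre : At ⁻¹' Set.Iic x =
        (((fun ω => F (S ω) (A ω)) ⁻¹' Set.Ioo (0:ℝ) 1) ∩
            ((fun ω => F (S ω) (A ω)) ⁻¹' Set.Iic (FA x))) ∪
          ((((fun ω => F (S ω) (A ω)) ⁻¹' Set.Ioo (0:ℝ) 1)ᶜ) ∩ {ω : Ω | (0:ℝ) ≤ x}) := by
      ext ω
      simp only [Set.mem_preimage, Set.mem_Iic, Set.mem_union, Set.mem_inter_iff,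
        Set.mem_compl_iff, Set.mem_setOf_eq]
      exact hAtle ω x
    rw [hpre]
    have hconst : MeasurableSet {ω : Ω | (0:ℝ) ≤ x} := by
      by_cases h : (0:ℝ) ≤ x
      · simp [h]
      · simp [h]
    exact ((Umeas measurableSet_Ioo).inter (Umeas measurableSet_Iic)).union
      ((Umeas measurableSet_Ioo).compl.inter hconst)
  -- Atil agrees a.e. with At
  have hae : Atil =ᵐ[μ] At := by
    have h0 : ∀ᵐ ω ∂μ, F (S ω) (A ω) ∈ Set.Ioo (0:ℝ) 1 := by
      rw [ae_iff]
      exact hNtotal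
    filter_upwards [h0] with ω hm
    rw [hAtil ω hm, hAtdef]
    simp only
    rw [if_pos hm]
  -- key computation
  have hkey : ∀ (x : ℝ) (s : 𝓢),
      μ ({ω | At ω ≤ x} ∩ E s) = ENNReal.ofReal (FA x) * μ (E s) := by
    intro x s
    have hNs' := hNs s
    have hstep : μ ({ω | At ω ≤ x} ∩ E s) = μ ({ω | F s (A ω) ≤ FA x} ∩ E s) := by
      have h1 : ({ω | At ω ≤ x} ∩ E s) \ ({ω | F s (A ω) ∉ Set.Ioo (0:ℝ) 1} ∩ E s) =
          ({ω | F s (A ω) ≤ FA x} ∩ E s) \ ({ω | F s (A ω) ∉ Set.Ioo (0:ℝ) 1} ∩ E s) := by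
        ext ω
        simp only [Set.mem_diff, Set.mem_inter_iff, Set.mem_setOf_eq, not_and, not_not]
        constructor
        · rintro ⟨⟨hle, hEs⟩, hnot⟩
          have hm : F s (A ω) ∈ Set.Ioo (0:ℝ) 1 := by
            by_contra hc
            exact (hnot hc) hEs
          have hss : S ω = s := hEs
          have := (hAtle ω x).mp hle
          rw [hss] at this
          rcases this with ⟨-, h⟩ | ⟨hc, -⟩
          · exact ⟨⟨h, hEs⟩, hnot⟩
          · exact absurd hm hc
        · rintro ⟨⟨hle, hEs⟩, hnot⟩
          have hm : F s (A ω) ∈ Set.Ioo (0:ℝ) 1 := by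
            by_contra hc
            exact (hnot hc) hEs
          have hss : S ω = s := hEs
          refine ⟨⟨(hAtle ω x).mpr ?_, hEs⟩, hnot⟩
          rw [hss]
          exact Or.inl ⟨hm, hle⟩
      calc μ ({ω | At ω ≤ x} ∩ E s)
          = μ (({ω | At ω ≤ x} ∩ E s) \ ({ω | F s (A ω) ∉ Set.Ioo (0:ℝ) 1} ∩ E s)) :=
            (measure_diff_null hNs').symm
        _ = μ (({ω | F s (A ω) ≤ FA x} ∩ E s) \ ({ω | F s (A ω) ∉ Set.Ioo (0:ℝ) 1} ∩ E s)) := by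
            rw [h1]
        _ = μ ({ω | F s (A ω) ≤ FA x} ∩ E s) := measure_diff_null hNs'
    rw [hstep]
    exact aux_uniform μ A hA (E s) (hEm s) (hpos s) (F s) (hGs s) (hcont s) (FA x)
      (hFA0 x) (hFA1 x)
  -- marginal law of At
  have hmarg : ∀ x : ℝ, μ {ω | At ω ≤ x} = ENNReal.ofReal (FA x) := by
    intro x
    have hXm : MeasurableSet {ω | At ω ≤ x} := hAtmeas measurableSet_Iic
    rw [hpart _ hXm]
    calc ∑ s : 𝓢, μ ({ω | At ω ≤ x} ∩ E s)
        = ∑ s : 𝓢, ENNReal.ofReal (FA x) * μ (E s) :=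
          Finset.sum_congr rfl (fun s _ => hkey x s)
      _ = ENNReal.ofReal (FA x) * ∑ s : 𝓢, μ (E s) := by rw [Finset.mul_sum]
      _ = ENNReal.ofReal (FA x) := by rw [hsum1, mul_one]
  -- independence of At and S
  have hind : IndepFun At S μ := by
    have hreal : (inferInstance : MeasurableSpace ℝ) =
        MeasurableSpace.generateFrom (Set.range Set.Iic) :=
      BorelSpace.measurable_eq.trans (borel_eq_generateFrom_Iic ℝ)
    have hSspace : (inferInstance : MeasurableSpace 𝓢) =
        MeasurableSpace.generateFrom (Set.range (fun s : 𝓢 => ({s} : Set 𝓢))) := by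
      refine le_antisymm ?_ (MeasurableSpace.generateFrom_le ?_)
      · intro t _
        have ht : t = ⋃ s ∈ t, {s} := (Set.biUnion_of_singleton t).symm
        rw [ht]
        exact MeasurableSet.biUnion t.to_countable
          (fun s _ => MeasurableSpace.measurableSet_generateFrom ⟨s, rfl⟩)
      · rintro _ ⟨s, rfl⟩
        exact measurableSet_singleton s
    have hpm1 : MeasurableSpace.comap At (inferInstance : MeasurableSpace ℝ) =
        MeasurableSpace.generateFrom (Set.preimage At '' Set.range Set.Iic) := by
      rw [hreal, MeasurableSpace.comap_generateFrom]
    have hpm2 : MeasurableSpace.comap S (inferInstance : MeasurableSpace 𝓢) =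
        MeasurableSpace.generateFrom
          (Set.preimage S '' Set.range (fun s : 𝓢 => ({s} : Set 𝓢))) := by
      rw [hSspace, MeasurableSpace.comap_generateFrom]
    have hp1 : IsPiSystem (Set.preimage At '' Set.range Set.Iic) := by
      have := isPiSystem_Iic (α := ℝ) |>.comap At
      exact this
    have hp2 : IsPiSystem (Set.preimage S '' Set.range (fun s : 𝓢 => ({s} : Set 𝓢))) := by
      rintro _ ⟨_, ⟨a, rfl⟩, rfl⟩ _ ⟨_, ⟨b, rfl⟩, rfl⟩ hne
      obtain ⟨ω, hωa, hωb⟩ := hne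
      have hab : a = b := by
        have h1 : S ω = a := hωa
        have h2 : S ω = b := hωb
        exact h1.symm.trans h2
      subst hab
      rw [Set.inter_self]
      exact ⟨{a}, ⟨a, rfl⟩, rfl⟩
    have hyp : IndepSets (Set.preimage At '' Set.range Set.Iic)
        (Set.preimage S '' Set.range (fun s : 𝓢 => ({s} : Set 𝓢))) μ := by
      rintro _ _ ⟨_, ⟨x, rfl⟩, rfl⟩ ⟨_, ⟨s, rfl⟩, rfl⟩
      simp only [Kernel.const_apply, MeasureTheory.ae_dirac_eq, Filter.eventually_pure]
      show μ ({ω | At ω ≤ x} ∩ E s) = μ {ω | At ω ≤ x} * μ (E s)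
      rw [hmarg x, hkey x s]
    exact IndepSets.indep hAtmeas.comap_le hS.comap_le hp1 hp2 hpm1 hpm2 hyp
  exact IndepFun.congr hind hae.symm (Filter.EventuallyEq.refl _ S)
end

section
/- Suppose the conditional cdf F_s is a continuous function of a for every s ∈ 𝓢, and let Ã := q(F_S(A)) be the MQ-adjusted variable. Then Ã has the same distribution as A, i.e., P(Ã ≤ a) = F_A(a) for every a ∈ ℝ. -/
open MeasureTheory ProbabilityTheory Filter Topology

/-- The MQ-adjustment preserves the marginal distribution: the adjusted variable
`Ã = q(F_S(A))` satisfies `P(Ã ≤ a) = F_A(a)` for every `a ∈ ℝ`. -/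
theorem mq_adjustment_preserves_marginal_distribution
    {Ω : Type*} [MeasurableSpace Ω] (μ : Measure Ω) [IsProbabilityMeasure μ]
    {𝓢 : Type*} [Fintype 𝓢] [MeasurableSpace 𝓢] [MeasurableSingletonClass 𝓢]
    (S : Ω → 𝓢) (hS : Measurable S)
    (hpos : ∀ s : 𝓢, μ {ω | S ω = s} ≠ 0)
    (A : Ω → ℝ) (hA : Measurable A)
    (F : 𝓢 → ℝ → ℝ)
    (hF : ∀ (s : 𝓢) (a : ℝ),
      F s a = (μ {ω | A ω ≤ a ∧ S ω = s}).toReal / (μ {ω | S ω = s}).toReal)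
    (hcont : ∀ s : 𝓢, Continuous (F s))
    (FA : ℝ → ℝ) (hFA : ∀ a : ℝ, FA a = (μ {ω | A ω ≤ a}).toReal)
    (q : ℝ → ℝ) (hq : ∀ p ∈ Set.Ioo (0:ℝ) 1, q p = sInf {x : ℝ | p ≤ FA x})
    (Atil : Ω → ℝ)
    (hAtil : ∀ ω, F (S ω) (A ω) ∈ Set.Ioo (0:ℝ) 1 → Atil ω = q (F (S ω) (A ω))) :
    ∀ a : ℝ, (μ {ω | Atil ω ≤ a}).toReal = FA a := by
  classical
  have hc_ne_top : ∀ s : 𝓢, μ {ω | S ω = s} ≠ ⊤ := fun s => measure_ne_top μ _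
  have hcr_pos : ∀ s : 𝓢, 0 < (μ {ω | S ω = s}).toReal := fun s =>
    ENNReal.toReal_pos (hpos s) (hc_ne_top s)
  have hmeasAS : ∀ (x : ℝ) (s : 𝓢), MeasurableSet {ω | A ω ≤ x ∧ S ω = s} := fun x s =>
    (hA measurableSet_Iic).inter (hS (measurableSet_singleton s))
  -- monotonicity of F s
  have hFmono : ∀ s : 𝓢, Monotone (F s) := by
    intro s x y hxy
    rw [hF s x, hF s y]
    have h1 : μ {ω | A ω ≤ x ∧ S ω = s} ≤ μ {ω | A ω ≤ y ∧ S ω = s} :=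
      measure_mono (fun ω h => ⟨h.1.trans hxy, h.2⟩)
    have h2 := ENNReal.toReal_mono (measure_ne_top μ _) h1
    exact div_le_div_of_nonneg_right h2 (hcr_pos s).le
  -- bounds on F s
  have hF01 : ∀ (s : 𝓢) (x : ℝ), 0 ≤ F s x ∧ F s x ≤ 1 := by
    intro s x
    rw [hF s x]
    constructor
    · positivity
    · rw [div_le_one (hcr_pos s)]
      exact ENNReal.toReal_mono (hc_ne_top s) (measure_mono fun ω h => h.2)
  -- the key identity for measures
  have hnum : ∀ (s : 𝓢) (x : ℝ),
      μ {ω | A ω ≤ x ∧ S ω = s} = ENNReal.ofReal (F s x) * μ {ω | S ω = s} := by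
    intro s x
    rw [hF s x, ENNReal.ofReal_div_of_pos (hcr_pos s),
      ENNReal.ofReal_toReal (measure_ne_top μ _), ENNReal.ofReal_toReal (hc_ne_top s),
      ENNReal.div_mul_cancel (hpos s) (hc_ne_top s)]
  -- limits of F s
  have htop : ∀ s : 𝓢, Tendsto (fun n : ℕ => F s n) atTop (𝓝 1) := by
    intro s
    have hmono : Monotone (fun n : ℕ => {ω | A ω ≤ (n : ℝ) ∧ S ω = s}) := by
      intro m n hmn ω h
      exact ⟨h.1.trans (by exact_mod_cast hmn), h.2⟩
    have hU : (⋃ n : ℕ, {ω | A ω ≤ (n : ℝ) ∧ S ω = s}) = {ω | S ω = s} := by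
      ext ω
      simp only [Set.mem_iUnion, Set.mem_setOf_eq]
      constructor
      · rintro ⟨n, _, h⟩; exact h
      · intro h
        obtain ⟨n, hn⟩ := exists_nat_ge (A ω)
        exact ⟨n, hn, h⟩
    have h1 := tendsto_measure_iUnion_atTop (μ := μ)
      (s := fun n : ℕ => {ω | A ω ≤ (n : ℝ) ∧ S ω = s}) hmono
    rw [hU] at h1
    have h2 := (ENNReal.tendsto_toReal (hc_ne_top s)).comp h1
    have h3 := h2.div_const (μ {ω | S ω = s}).toReal
    rw [div_self (hcr_pos s).ne'] at h3
    exact h3.congr fun n => (hF s n).symm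
  have hbot : ∀ s : 𝓢, Tendsto (fun n : ℕ => F s (-(n : ℝ))) atTop (𝓝 0) := by
    intro s
    have hanti : Antitone (fun n : ℕ => {ω | A ω ≤ -(n : ℝ) ∧ S ω = s}) := by
      intro m n hmn ω h
      refine ⟨h.1.trans ?_, h.2⟩
      have : (m : ℝ) ≤ n := by exact_mod_cast hmn
      linarith
    have hI : (⋂ n : ℕ, {ω | A ω ≤ -(n : ℝ) ∧ S ω = s}) = ∅ := by
      ext ω
      simp only [Set.mem_iInter, Set.mem_setOf_eq, Set.mem_empty_iff_false, iff_false, not_forall]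
      obtain ⟨n, hn⟩ := exists_nat_gt (-(A ω))
      exact ⟨n, fun h => absurd h.1 (by linarith)⟩
    have h1 := tendsto_measure_iInter_atTop (μ := μ)
      (fun n => (hmeasAS _ s).nullMeasurableSet) hanti ⟨0, measure_ne_top μ _⟩
    rw [hI, measure_empty] at h1
    have h2 := (ENNReal.tendsto_toReal (by simp : (0 : ENNReal) ≠ ⊤)).comp h1
    have h3 := h2.div_const (μ {ω | S ω = s}).toReal
    simp only [ENNReal.toReal_zero, zero_div] at h3
    exact h3.congr fun n => (hF s _).symm
  -- probability integral transform (conditional, uniform distribution of F_s(A))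
  have hPIT : ∀ (s : 𝓢) (t : ℝ), 0 ≤ t → t ≤ 1 →
      μ {ω | F s (A ω) ≤ t ∧ S ω = s} = ENNReal.ofReal t * μ {ω | S ω = s} := by
    intro s t ht0 ht1
    rcases lt_or_eq_of_le ht1 with ht1 | rfl
    · set K := {x : ℝ | F s x ≤ t} with hKdef
      have hKb : BddAbove K := by
        obtain ⟨n, hn⟩ := ((htop s).eventually (eventually_gt_nhds ht1)).exists
        refine ⟨n, fun x hx => ?_⟩
        by_contra hlt
        push_neg at hlt
        exact absurd ((hFmono s hlt.le).trans hx) (not_le.mpr hn)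
      by_cases hKne : K.Nonempty
      · have hKclosed : IsClosed K := isClosed_le (hcont s) continuous_const
        set x₀ := sSup K with hx₀def
        have hx₀mem : x₀ ∈ K := hKclosed.csSup_mem hKne hKb
        have hle : F s x₀ ≤ t := hx₀mem
        have hge : t ≤ F s x₀ := by
          by_contra h
          push_neg at h
          have h1 : ∀ᶠ y in 𝓝 x₀, F s y < t :=
            ContinuousAt.eventually_lt ((hcont s).continuousAt) continuousAt_const h
          have h2 : ∀ᶠ y in 𝓝[>] x₀, F s y < t := h1.filter_mono nhdsWithin_le_nhds
          obtain ⟨y, hy1, hy2⟩ := (h2.and self_mem_nhdsWithin).exists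
          exact absurd (le_csSup hKb hy1.le) (not_le.mpr hy2)
        have hKeq : {ω | F s (A ω) ≤ t ∧ S ω = s} = {ω | A ω ≤ x₀ ∧ S ω = s} := by
          ext ω
          simp only [Set.mem_setOf_eq, and_congr_left_iff]
          intro _
          constructor
          · intro h; exact le_csSup hKb h
          · intro h; exact (hFmono s h).trans hle
        rw [hKeq, hnum s x₀, le_antisymm hle hge]
      · have hempty : {ω | F s (A ω) ≤ t ∧ S ω = s} = ∅ := by
          ext ω
          simp only [Set.mem_setOf_eq, Set.mem_empty_iff_false, iff_false, not_and]
          intro h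
          exact absurd ⟨A ω, h⟩ hKne
        have ht0' : t ≤ 0 := by
          have hev : ∀ n : ℕ, t ≤ F s (-(n : ℝ)) := fun n =>
            le_of_not_gt fun h => hKne ⟨_, h.le⟩
          exact ge_of_tendsto' (hbot s) hev
        rw [hempty, measure_empty, le_antisymm ht0' ht0, ENNReal.ofReal_zero, zero_mul]
    · have hall : {ω | F s (A ω) ≤ 1 ∧ S ω = s} = {ω | S ω = s} := by
        ext ω
        simp only [Set.mem_setOf_eq, and_iff_right_iff_imp]
        exact fun _ => (hF01 s (A ω)).2
      rw [hall, ENNReal.ofReal_one, one_mul]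
  -- the level set {F_s(A) = 1} is null (conditionally)
  have hone : ∀ s : 𝓢, μ {ω | F s (A ω) = 1 ∧ S ω = s} = 0 := by
    intro s
    have hE1m : MeasurableSet {ω | F s (A ω) = 1 ∧ S ω = s} :=
      (((hcont s).measurable.comp hA) (measurableSet_singleton 1)).inter
        (hS (measurableSet_singleton s))
    have hle : ∀ n : ℕ, (μ {ω | F s (A ω) = 1 ∧ S ω = s}).toReal ≤
        (μ {ω | S ω = s}).toReal * (1 / (n + 1)) := by
      intro n
      have hnp : (0 : ℝ) < 1 / (n + 1) := by positivity
      have hn1 : (1 : ℝ) / (n + 1) ≤ 1 := by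
        rw [div_le_one (by positivity)]
        have : (0:ℝ) ≤ (n : ℝ) := Nat.cast_nonneg n
        linarith
      have htn0 : (0 : ℝ) ≤ 1 - 1 / (n + 1) := by linarith
      have htn1 : (1 : ℝ) - 1 / (n + 1) ≤ 1 := by linarith
      have hE2m : MeasurableSet {ω | F s (A ω) ≤ 1 - 1 / (n + 1) ∧ S ω = s} :=
        (((hcont s).measurable.comp hA) measurableSet_Iic).inter
          (hS (measurableSet_singleton s))
      have hdisj : Disjoint {ω | F s (A ω) = 1 ∧ S ω = s}
          {ω | F s (A ω) ≤ 1 - 1 / (n + 1) ∧ S ω = s} := by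
        rw [Set.disjoint_left]
        rintro ω ⟨h1, _⟩ ⟨h2, _⟩
        rw [h1] at h2
        linarith
      have hsub : {ω | F s (A ω) = 1 ∧ S ω = s} ∪
          {ω | F s (A ω) ≤ 1 - 1 / (n + 1) ∧ S ω = s} ⊆ {ω | S ω = s} := by
        rintro ω (⟨_, h⟩ | ⟨_, h⟩) <;> exact h
      have hadd : μ {ω | F s (A ω) = 1 ∧ S ω = s} +
          μ {ω | F s (A ω) ≤ 1 - 1 / (n + 1) ∧ S ω = s} ≤ μ {ω | S ω = s} := by
        rw [← measure_union hdisj hE2m]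
        exact measure_mono hsub
      have hE2 : (μ {ω | F s (A ω) ≤ 1 - 1 / (n + 1) ∧ S ω = s}).toReal =
          (1 - 1 / (n + 1)) * (μ {ω | S ω = s}).toReal := by
        rw [hPIT s (1 - 1 / (n + 1)) htn0 htn1, ENNReal.toReal_mul,
          ENNReal.toReal_ofReal htn0]
      have h2 : (μ {ω | F s (A ω) = 1 ∧ S ω = s}).toReal +
          (μ {ω | F s (A ω) ≤ 1 - 1 / (n + 1) ∧ S ω = s}).toReal ≤
          (μ {ω | S ω = s}).toReal := by
        rw [← ENNReal.toReal_add (measure_ne_top μ _) (measure_ne_top μ _)]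
        exact ENNReal.toReal_mono (hc_ne_top s) hadd
      rw [hE2] at h2
      have hring : (μ {ω | S ω = s}).toReal -
          (1 - 1 / (n + 1)) * (μ {ω | S ω = s}).toReal =
          (μ {ω | S ω = s}).toReal * (1 / (n + 1)) := by ring
      linarith
    have htend : Tendsto (fun n : ℕ => (μ {ω | S ω = s}).toReal * (1 / ((n : ℝ) + 1)))
        atTop (𝓝 0) := by
      have h := tendsto_one_div_add_atTop_nhds_zero_nat.const_mul (μ {ω | S ω = s}).toReal
      simpa using h
    have h0 : (μ {ω | F s (A ω) = 1 ∧ S ω = s}).toReal ≤ 0 := ge_of_tendsto' htend hle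
    have h0' : (μ {ω | F s (A ω) = 1 ∧ S ω = s}).toReal = 0 :=
      le_antisymm h0 ENNReal.toReal_nonneg
    rcases (ENNReal.toReal_eq_zero_iff _).mp h0' with h | h
    · exact h
    · exact absurd h (measure_ne_top μ _)
  -- properties of FA
  have hFAmono : Monotone FA := by
    intro x y hxy
    rw [hFA, hFA]
    exact ENNReal.toReal_mono (measure_ne_top μ _) (measure_mono fun ω h => le_trans h hxy)
  have hFAtop : Tendsto (fun n : ℕ => FA n) atTop (𝓝 1) := by
    have hmono : Monotone (fun n : ℕ => {ω | A ω ≤ (n : ℝ)}) := by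
      intro m n hmn ω h
      simp only [Set.mem_setOf_eq] at h ⊢
      exact h.trans (by exact_mod_cast hmn)
    have hU : (⋃ n : ℕ, {ω | A ω ≤ (n : ℝ)}) = Set.univ := by
      ext ω
      simp only [Set.mem_iUnion, Set.mem_setOf_eq, Set.mem_univ, iff_true]
      exact exists_nat_ge (A ω)
    have h1 := tendsto_measure_iUnion_atTop (μ := μ) (s := fun n : ℕ => {ω | A ω ≤ (n : ℝ)}) hmono
    rw [hU, measure_univ] at h1
    have h2 := (ENNReal.tendsto_toReal (by simp : (1 : ENNReal) ≠ ⊤)).comp h1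
    simp only [ENNReal.toReal_one] at h2
    exact h2.congr fun n => (hFA n).symm
  have hFAbot : Tendsto (fun n : ℕ => FA (-(n : ℝ))) atTop (𝓝 0) := by
    have hanti : Antitone (fun n : ℕ => {ω | A ω ≤ -(n : ℝ)}) := by
      intro m n hmn ω h
      simp only [Set.mem_setOf_eq] at h ⊢
      refine h.trans ?_
      have : (m : ℝ) ≤ n := by exact_mod_cast hmn
      linarith
    have hI : (⋂ n : ℕ, {ω | A ω ≤ -(n : ℝ)}) = ∅ := by
      ext ω
      simp only [Set.mem_iInter, Set.mem_setOf_eq, Set.mem_empty_iff_false, iff_false, not_forall]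
      obtain ⟨n, hn⟩ := exists_nat_gt (-(A ω))
      exact ⟨n, by linarith⟩
    have hAm : ∀ n : ℕ, NullMeasurableSet {ω | A ω ≤ -(n : ℝ)} μ := fun n =>
      (hA measurableSet_Iic).nullMeasurableSet
    have h1 := tendsto_measure_iInter_atTop (μ := μ)
      (s := fun n : ℕ => {ω | A ω ≤ -(n : ℝ)}) hAm hanti ⟨0, measure_ne_top μ _⟩
    rw [hI, measure_empty] at h1
    have h2 := (ENNReal.tendsto_toReal (by simp : (0 : ENNReal) ≠ ⊤)).comp h1
    simp only [ENNReal.toReal_zero] at h2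
    exact h2.congr fun n => (hFA _).symm
  -- the quantile characterization
  have hqiff : ∀ p ∈ Set.Ioo (0:ℝ) 1, ∀ x : ℝ, (q p ≤ x ↔ p ≤ FA x) := by
    intro p hp x
    have hIne : Set.Nonempty {y : ℝ | p ≤ FA y} := by
      obtain ⟨n, hn⟩ := (hFAtop.eventually (eventually_gt_nhds hp.2)).exists
      exact ⟨n, hn.le⟩
    have hIbdd : BddBelow {y : ℝ | p ≤ FA y} := by
      obtain ⟨n, hn⟩ := (hFAbot.eventually (eventually_lt_nhds hp.1)).exists
      refine ⟨-(n : ℝ), fun y hy => ?_⟩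
      by_contra h
      push_neg at h
      exact absurd (hy.trans (hFAmono h.le)) (not_le.mpr hn)
    have hqeq : q p = sInf {y : ℝ | p ≤ FA y} := hq p hp
    have hFAq : p ≤ FA (q p) := by
      have hm : Antitone (fun n : ℕ => {ω | A ω ≤ q p + 1 / ((n : ℝ) + 1)}) := by
        intro m n hmn ω h
        simp only [Set.mem_setOf_eq] at h ⊢
        refine h.trans ?_
        have h1 : (1 : ℝ) / ((n : ℝ) + 1) ≤ 1 / ((m : ℝ) + 1) := by
          apply one_div_le_one_div_of_le (by positivity)
          have : (m : ℝ) ≤ n := by exact_mod_cast hmn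
          linarith
        linarith
      have hIcap : (⋂ n : ℕ, {ω | A ω ≤ q p + 1 / ((n : ℝ) + 1)}) = {ω | A ω ≤ q p} := by
        ext ω
        simp only [Set.mem_iInter, Set.mem_setOf_eq]
        constructor
        · intro h
          by_contra hc
          push_neg at hc
          obtain ⟨n, hn⟩ := exists_nat_one_div_lt (show (0:ℝ) < A ω - q p by linarith)
          have := h n
          linarith
        · intro h n
          have : (0 : ℝ) < 1 / ((n : ℝ) + 1) := by positivity
          linarith
      have hAm : ∀ n : ℕ, NullMeasurableSet {ω | A ω ≤ q p + 1 / ((n : ℝ) + 1)} μ := fun n =>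
        (hA measurableSet_Iic).nullMeasurableSet
      have h1 := tendsto_measure_iInter_atTop (μ := μ)
        (s := fun n : ℕ => {ω | A ω ≤ q p + 1 / ((n : ℝ) + 1)}) hAm hm ⟨0, measure_ne_top μ _⟩
      rw [hIcap] at h1
      have h2 := (ENNReal.tendsto_toReal (measure_ne_top μ _)).comp h1
      have h3 : ∀ n : ℕ, p ≤ ((fun x => ENNReal.toReal x) ∘
          (μ ∘ fun n : ℕ => {ω | A ω ≤ q p + 1 / ((n : ℝ) + 1)})) n := by
        intro n
        obtain ⟨y, hy, hylt⟩ : ∃ y ∈ {y : ℝ | p ≤ FA y}, y < q p + 1 / ((n : ℝ) + 1) := by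
          by_contra hcon
          push_neg at hcon
          have hle2 : q p + 1 / ((n : ℝ) + 1) ≤ sInf {y : ℝ | p ≤ FA y} := le_csInf hIne hcon
          rw [← hqeq] at hle2
          have : (0 : ℝ) < 1 / ((n : ℝ) + 1) := by positivity
          linarith
        have h4 : FA y ≤ FA (q p + 1 / ((n : ℝ) + 1)) := hFAmono hylt.le
        have h5 := hy.trans h4
        rwa [hFA] at h5
      have h6 := ge_of_tendsto' h2 h3
      rwa [hFA]
    constructor
    · intro h
      exact hFAq.trans (hFAmono h)
    · intro h
      rw [hqeq]
      exact csInf_le hIbdd h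
  -- main computation
  intro a
  have ht0 : 0 ≤ FA a := by rw [hFA]; exact ENNReal.toReal_nonneg
  have ht1 : FA a ≤ 1 := by
    rw [hFA]
    have h := ENNReal.toReal_mono (by simp : (1 : ENNReal) ≠ ⊤)
      (prob_le_one (μ := μ) (s := {ω | A ω ≤ a}))
    simpa using h
  -- the bad set is null
  have hN : μ {ω | F (S ω) (A ω) ≤ 0 ∨ F (S ω) (A ω) = 1} = 0 := by
    have hsub : {ω | F (S ω) (A ω) ≤ 0 ∨ F (S ω) (A ω) = 1} ⊆
        ⋃ s : 𝓢, ({ω | F s (A ω) ≤ 0 ∧ S ω = s} ∪ {ω | F s (A ω) = 1 ∧ S ω = s}) := by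
      intro ω hω
      refine Set.mem_iUnion.mpr ⟨S ω, ?_⟩
      rcases hω with h | h
      · exact Or.inl ⟨h, rfl⟩
      · exact Or.inr ⟨h, rfl⟩
    have hz : ∀ s : 𝓢,
        μ ({ω | F s (A ω) ≤ 0 ∧ S ω = s} ∪ {ω | F s (A ω) = 1 ∧ S ω = s}) = 0 := by
      intro s
      refine measure_union_null ?_ (hone s)
      have h := hPIT s 0 le_rfl zero_le_one
      simpa using h
    exact le_antisymm (le_trans (measure_mono hsub) (le_of_eq (measure_iUnion_null hz)))
      (zero_le)
  -- a.e. equality of the two events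
  have hae : {ω | Atil ω ≤ a} =ᵐ[μ] {ω | F (S ω) (A ω) ≤ FA a} := by
    filter_upwards [compl_mem_ae_iff.mpr hN] with ω hω
    simp only [Set.mem_compl_iff, Set.mem_setOf_eq, not_or] at hω
    obtain ⟨h0, h1⟩ := hω
    have hp : F (S ω) (A ω) ∈ Set.Ioo (0:ℝ) 1 :=
      ⟨lt_of_not_ge h0, lt_of_le_of_ne (hF01 (S ω) (A ω)).2 h1⟩
    simp only [Set.mem_setOf_eq, eq_iff_iff]
    show Atil ω ≤ a ↔ F (S ω) (A ω) ≤ FA a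
    rw [hAtil ω hp]
    exact hqiff _ hp a
  have hμeq : μ {ω | Atil ω ≤ a} = μ {ω | F (S ω) (A ω) ≤ FA a} := measure_congr hae
  -- decompose over the fibers of S
  have hTdecomp : {ω | F (S ω) (A ω) ≤ FA a} =
      ⋃ s : 𝓢, {ω | F s (A ω) ≤ FA a ∧ S ω = s} := by
    ext ω
    simp only [Set.mem_iUnion, Set.mem_setOf_eq]
    constructor
    · intro h; exact ⟨S ω, h, rfl⟩
    · rintro ⟨s, h, rfl⟩; exact h
  have hdisj : Pairwise (Function.onFun Disjoint
      fun s : 𝓢 => {ω | F s (A ω) ≤ FA a ∧ S ω = s}) := by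
    intro s1 s2 hne
    simp only [Function.onFun]
    rw [Set.disjoint_left]
    rintro ω ⟨_, h1⟩ ⟨_, h2⟩
    exact hne (h1.symm.trans h2)
  have hmeasT : ∀ s : 𝓢, MeasurableSet {ω | F s (A ω) ≤ FA a ∧ S ω = s} := fun s =>
    (((hcont s).measurable.comp hA) measurableSet_Iic).inter (hS (measurableSet_singleton s))
  have hpart : (⋃ s : 𝓢, {ω | S ω = s}) = Set.univ := by
    ext ω
    simp only [Set.mem_iUnion, Set.mem_setOf_eq, Set.mem_univ, iff_true]
    exact ⟨S ω, rfl⟩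
  have hpdisj : Pairwise (Function.onFun Disjoint fun s : 𝓢 => {ω | S ω = s}) := by
    intro s1 s2 hne
    simp only [Function.onFun]
    rw [Set.disjoint_left]
    rintro ω h1 h2
    exact hne (h1.symm.trans h2)
  have hsum : μ {ω | F (S ω) (A ω) ≤ FA a} = ENNReal.ofReal (FA a) := by
    rw [hTdecomp, measure_iUnion hdisj hmeasT]
    have heach : ∀ s : 𝓢, μ {ω | F s (A ω) ≤ FA a ∧ S ω = s} =
        ENNReal.ofReal (FA a) * μ {ω | S ω = s} := fun s => hPIT s (FA a) ht0 ht1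
    calc (∑' s : 𝓢, μ {ω | F s (A ω) ≤ FA a ∧ S ω = s})
        = ∑' s : 𝓢, ENNReal.ofReal (FA a) * μ {ω | S ω = s} := tsum_congr heach
      _ = ENNReal.ofReal (FA a) * ∑' s : 𝓢, μ {ω | S ω = s} := ENNReal.tsum_mul_left
      _ = ENNReal.ofReal (FA a) * μ (⋃ s : 𝓢, {ω | S ω = s}) := by
          rw [measure_iUnion hpdisj (fun s => hS (measurableSet_singleton s))]
      _ = ENNReal.ofReal (FA a) := by rw [hpart, measure_univ, mul_one]
  rw [hμeq, hsum, ENNReal.toReal_ofReal ht0]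
end

section
/- Suppose the conditional cdf F_s is a continuous function of a for every s ∈ 𝓢, and let Ã := q(F_S(A)) be the MQ-adjusted variable. Then for every s ∈ 𝓢 and every a ∈ ℝ, P(Ã ≤ a | S = s) = F_A(a); that is, the conditional cdf of the adjusted variable given any sensitive group coincides with the marginal cdf of A, so the conditional cdfs of Ã are identical across all sensitive groups. -/
open MeasureTheory ProbabilityTheory

open Filter
open scoped ENNReal NNReal

/-- Upper level sets of a Stieltjes function are closed. -/
lemma stieltjes_levelset_isClosed (f : StieltjesFunction ℝ) (p : ℝ) :
    IsClosed {x : ℝ | p ≤ f x} := by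
  have : IsOpen {x : ℝ | f x < p} := by
    rw [isOpen_iff_mem_nhds]
    intro x hx
    have h1 : ∀ᶠ y in nhdsWithin x (Set.Ici x), f y < p :=
      (f.right_continuous x).eventually (eventually_lt_nhds hx)
    rw [nhdsWithin, Filter.eventually_inf_principal] at h1
    filter_upwards [h1] with y hy
    rcases le_or_gt x y with h | h
    · exact hy h
    · exact lt_of_le_of_lt (f.mono h.le) hx
  have : IsClosed {x : ℝ | ¬ f x < p} := isClosed_compl_iff.mpr this
  simpa [not_lt] using this

/-- The cdf-level-set measure identity: if the cdf of a probability measure on ℝ is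
continuous, then the measure of `{x | cdf x ≤ t}` is `t` for `t ∈ [0,1]`. -/
lemma measure_levelset_cdf (ρ : Measure ℝ) [IsProbabilityMeasure ρ]
    (hc : Continuous (cdf ρ)) {t : ℝ} (ht0 : 0 ≤ t) (ht1 : t ≤ 1) :
    ρ {x : ℝ | cdf ρ x ≤ t} = ENNReal.ofReal t := by
  rcases eq_or_lt_of_le ht1 with h1 | h1
  · subst h1
    have : {x : ℝ | cdf ρ x ≤ 1} = Set.univ := by
      ext x; simp [cdf_le_one (μ := ρ) x]
    rw [this, measure_univ, ENNReal.ofReal_one]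
  · obtain ⟨x0, hx0⟩ : ∃ x0, t < cdf ρ x0 :=
      ((tendsto_cdf_atTop (μ := ρ)).eventually (eventually_gt_nhds h1)).exists
    by_cases hne : {x : ℝ | cdf ρ x ≤ t}.Nonempty
    · have hbdd : BddAbove {x : ℝ | cdf ρ x ≤ t} := by
        refine ⟨x0, fun y hy => ?_⟩
        by_contra h
        push_neg at h
        exact absurd (le_trans ((cdf ρ).mono h.le) hy) (not_le.mpr hx0)
      have hclosed : IsClosed {x : ℝ | cdf ρ x ≤ t} :=
        isClosed_le hc continuous_const
      set c := sSup {x : ℝ | cdf ρ x ≤ t} with hc_def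
      have hc_mem : cdf ρ c ≤ t := hclosed.csSup_mem hne hbdd
      have hcx0 : c ≤ x0 := csSup_le hne (fun y hy => by
        by_contra h
        push_neg at h
        exact absurd (le_trans ((cdf ρ).mono h.le) hy) (not_le.mpr hx0))
      have heq : cdf ρ c = t := by
        refine le_antisymm hc_mem ?_
        have := intermediate_value_Icc hcx0 (hc.continuousOn)
        have ht_mem : t ∈ Set.Icc (cdf ρ c) (cdf ρ x0) := ⟨hc_mem, hx0.le⟩
        obtain ⟨x, hx_mem, hx_eq⟩ := this ht_mem
        have : x ≤ c := le_csSup hbdd (by simp [hx_eq])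
        calc t = cdf ρ x := hx_eq.symm
        _ ≤ cdf ρ c := (cdf ρ).mono this
      have hset : {x : ℝ | cdf ρ x ≤ t} = Set.Iic c := by
        ext x
        exact ⟨fun h => le_csSup hbdd h, fun h => le_trans ((cdf ρ).mono h) hc_mem⟩
      rw [hset, ← heq, ofReal_cdf]
    · rw [Set.not_nonempty_iff_eq_empty] at hne
      rw [hne, measure_empty]
      have ht0' : t ≤ 0 := by
        by_contra h
        push_neg at h
        obtain ⟨x, hx⟩ := ((tendsto_cdf_atBot (μ := ρ)).eventually (eventually_lt_nhds h)).exists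
        simp [Set.eq_empty_iff_forall_notMem] at hne
        exact absurd hx (not_lt.mpr (hne x).le)
      simp [ENNReal.ofReal_eq_zero.mpr ht0']

/-- Quantile characterization: `sInf {x | p ≤ cdf x} ≤ a ↔ p ≤ cdf a` for `p ∈ (0,1)`. -/
lemma quantile_le_iff (ρ : Measure ℝ) [IsProbabilityMeasure ρ]
    {p : ℝ} (hp0 : 0 < p) (hp1 : p < 1) (a : ℝ) :
    sInf {x : ℝ | p ≤ cdf ρ x} ≤ a ↔ p ≤ cdf ρ a := by
  have hne : {x : ℝ | p ≤ cdf ρ x}.Nonempty := by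
    obtain ⟨x, hx⟩ := ((tendsto_cdf_atTop (μ := ρ)).eventually (eventually_gt_nhds hp1)).exists
    exact ⟨x, hx.le⟩
  have hbdd : BddBelow {x : ℝ | p ≤ cdf ρ x} := by
    obtain ⟨x0, hx0⟩ := Filter.eventually_atBot.mp
      ((tendsto_cdf_atBot (μ := ρ)).eventually (eventually_lt_nhds hp0))
    refine ⟨x0, fun y hy => ?_⟩
    by_contra h
    push_neg at h
    exact absurd hy (not_le.mpr (hx0 y h.le))
  constructor
  · intro h
    have hmem : sInf {x : ℝ | p ≤ cdf ρ x} ∈ {x : ℝ | p ≤ cdf ρ x} :=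
      (stieltjes_levelset_isClosed (cdf ρ) p).csInf_mem hne hbdd
    exact le_trans hmem ((cdf ρ).mono h)
  · intro h
    exact csInf_le hbdd h


/-- The MQ-adjustment equalizes conditional cdfs across sensitive groups:
for every group `s` and every `a`, `P(Ã ≤ a | S = s) = F_A(a)`, i.e. the
conditional cdf of the adjusted variable coincides with the marginal cdf of `A`. -/
theorem mq_adjustment_equalizes_conditional_cdfs
    {Ω : Type*} [MeasurableSpace Ω] (μ : Measure Ω) [IsProbabilityMeasure μ]
    {𝓢 : Type*} [Fintype 𝓢] [MeasurableSpace 𝓢] [MeasurableSingletonClass 𝓢]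
    (S : Ω → 𝓢) (hS : Measurable S)
    (hpos : ∀ s : 𝓢, μ {ω | S ω = s} ≠ 0)
    (A : Ω → ℝ) (hA : Measurable A)
    (F : 𝓢 → ℝ → ℝ)
    (hF : ∀ (s : 𝓢) (a : ℝ),
      F s a = (μ {ω | A ω ≤ a ∧ S ω = s}).toReal / (μ {ω | S ω = s}).toReal)
    (hcont : ∀ s : 𝓢, Continuous (F s))
    (FA : ℝ → ℝ) (hFA : ∀ a : ℝ, FA a = (μ {ω | A ω ≤ a}).toReal)
    (q : ℝ → ℝ) (hq : ∀ p ∈ Set.Ioo (0:ℝ) 1, q p = sInf {x : ℝ | p ≤ FA x})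
    (Atil : Ω → ℝ)
    (hAtil : ∀ ω, F (S ω) (A ω) ∈ Set.Ioo (0:ℝ) 1 → Atil ω = q (F (S ω) (A ω))) :
    ∀ (s : 𝓢) (a : ℝ),
      (μ {ω | Atil ω ≤ a ∧ S ω = s}).toReal / (μ {ω | S ω = s}).toReal = FA a := by
  intro s a
  set E : Set Ω := {ω | S ω = s} with hE_def
  have hE : MeasurableSet E := hS (measurableSet_singleton s)
  have hE0 : μ E ≠ 0 := hpos s
  set ν : Measure Ω := μ[|E] with hν_def
  haveI hνP : IsProbabilityMeasure ν := cond_isProbabilityMeasure hE0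
  set ρ : Measure ℝ := ν.map A with hρ_def
  set ρA : Measure ℝ := μ.map A with hρA_def
  haveI : IsProbabilityMeasure ρ := Measure.isProbabilityMeasure_map hA.aemeasurable
  haveI : IsProbabilityMeasure ρA := Measure.isProbabilityMeasure_map hA.aemeasurable
  -- Step 1: conditional measure identity
  have key1 : ∀ T : Set Ω, (μ (T ∩ E)).toReal / (μ E).toReal = (ν T).toReal := by
    intro T
    rw [hν_def, cond_apply hE, Set.inter_comm, ENNReal.toReal_mul, ENNReal.toReal_inv,
      div_eq_mul_inv, mul_comm]
  -- Step 2: F s is the cdf of the conditional law of A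
  have key2 : ∀ x : ℝ, F s x = cdf ρ x := by
    intro x
    have hmap : ρ (Set.Iic x) = ν {ω | A ω ≤ x} := Measure.map_apply hA measurableSet_Iic
    rw [hF, cdf_eq_real, measureReal_def, hmap, ← key1 {ω | A ω ≤ x}]
    rfl
  -- Step 3: FA is the cdf of the law of A
  have key3 : ∀ x : ℝ, FA x = cdf ρA x := by
    intro x
    have hmap : ρA (Set.Iic x) = μ {ω | A ω ≤ x} := Measure.map_apply hA measurableSet_Iic
    rw [hFA, cdf_eq_real, measureReal_def, hmap]
  have hcontρ : Continuous (cdf ρ) := by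
    have := hcont s
    rwa [show (F s : ℝ → ℝ) = cdf ρ from funext key2] at this
  -- Step 4: null boundary sets
  have null0 : ν {ω | cdf ρ (A ω) ≤ 0} = 0 := by
    have hms : MeasurableSet {x : ℝ | cdf ρ x ≤ 0} :=
      (isClosed_le hcontρ continuous_const).measurableSet
    have : ν {ω | cdf ρ (A ω) ≤ 0} = ρ {x : ℝ | cdf ρ x ≤ 0} :=
      (Measure.map_apply hA hms).symm
    rw [this, measure_levelset_cdf ρ hcontρ le_rfl zero_le_one]
    simp
  have null1 : ν {ω | 1 ≤ cdf ρ (A ω)} = 0 := by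
    have hms1 : MeasurableSet {x : ℝ | 1 ≤ cdf ρ x} :=
      (isClosed_le continuous_const hcontρ).measurableSet
    have hρ1 : ρ {x : ℝ | 1 ≤ cdf ρ x} = 0 := by
      refine le_antisymm ?_ zero_le
      refine ENNReal.le_of_forall_pos_le_add fun ε hε _ => ?_
      have hεE : ENNReal.ofReal (ε : ℝ) = (ε : ℝ≥0∞) := ENNReal.ofReal_coe_nnreal
      rw [zero_add]
      rcases le_or_gt 1 (ε : ℝ) with hε1 | hε1
      · have h1 : ρ {x : ℝ | 1 ≤ cdf ρ x} ≤ 1 := prob_le_one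
        have h2 : (1 : ℝ≥0∞) ≤ (ε : ℝ≥0∞) := by
          rw [← hεE, ← ENNReal.ofReal_one]
          exact ENNReal.ofReal_le_ofReal hε1
        exact le_trans h1 h2
      · have hms : MeasurableSet {x : ℝ | cdf ρ x ≤ 1 - (ε : ℝ)} :=
          (isClosed_le hcontρ continuous_const).measurableSet
        have hsub : {x : ℝ | 1 ≤ cdf ρ x} ⊆ {x : ℝ | cdf ρ x ≤ 1 - (ε : ℝ)}ᶜ := by
          intro x hx
          simp only [Set.mem_compl_iff, Set.mem_setOf_eq, not_le]
          have hεpos : (0 : ℝ) < ε := hε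
          calc (1 : ℝ) - ε < 1 := by linarith
            _ ≤ cdf ρ x := hx
        have h3 : ρ {x : ℝ | 1 ≤ cdf ρ x} ≤ ρ ({x : ℝ | cdf ρ x ≤ 1 - (ε : ℝ)}ᶜ) :=
          measure_mono hsub
        have h4 : ρ ({x : ℝ | cdf ρ x ≤ 1 - (ε : ℝ)}ᶜ) = 1 - ENNReal.ofReal (1 - (ε : ℝ)) := by
          rw [measure_compl hms (measure_ne_top _ _), measure_univ,
            measure_levelset_cdf ρ hcontρ (by linarith) (by
              have hεpos : (0 : ℝ) < ε := hε
              linarith)]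
        have h5 : (1 : ℝ≥0∞) - ENNReal.ofReal (1 - (ε : ℝ)) = ENNReal.ofReal (ε : ℝ) := by
          rw [← ENNReal.ofReal_one, ← ENNReal.ofReal_sub _ (by linarith)]
          norm_num
        rw [h4, h5, hεE] at h3
        exact h3
    have : {ω | 1 ≤ cdf ρ (A ω)} = A ⁻¹' {x : ℝ | 1 ≤ cdf ρ x} := rfl
    rw [this, ← Measure.map_apply hA hms1]
    exact hρ1
  have nullE : ν Eᶜ = 0 := by
    rw [hν_def, cond_apply hE, Set.inter_compl_self, measure_empty, mul_zero]
  -- a.e. facts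
  have haeS : ∀ᵐ ω ∂ν, S ω = s := by
    rw [ae_iff]
    convert nullE using 2
    rfl
  have hae0 : ∀ᵐ ω ∂ν, 0 < cdf ρ (A ω) := by
    rw [ae_iff]
    simpa [not_lt] using null0
  have hae1 : ∀ᵐ ω ∂ν, cdf ρ (A ω) < 1 := by
    rw [ae_iff]
    simpa [not_lt] using null1
  -- Step 5: a.e. equality of events
  have key4 : {ω | Atil ω ≤ a} =ᵐ[ν] {ω | cdf ρ (A ω) ≤ FA a} := by
    rw [Filter.eventuallyEq_set]
    filter_upwards [haeS, hae0, hae1] with ω hs h0 h1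
    have hFval : F (S ω) (A ω) = cdf ρ (A ω) := by rw [hs, key2]
    have hmem : F (S ω) (A ω) ∈ Set.Ioo (0:ℝ) 1 := by rw [hFval]; exact ⟨h0, h1⟩
    have hAtil' : Atil ω = q (cdf ρ (A ω)) := by rw [hAtil ω hmem, hFval]
    have hqval : q (cdf ρ (A ω)) = sInf {x : ℝ | cdf ρ (A ω) ≤ cdf ρA x} := by
      rw [hq _ (hFval ▸ hmem)]
      congr 1
      ext x
      rw [Set.mem_setOf_eq, Set.mem_setOf_eq, key3]
    simp only [Set.mem_setOf_eq, hAtil', hqval]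
    rw [quantile_le_iff ρA h0 h1 a, key3]
  -- Step 6: assemble
  have hFA_mem : 0 ≤ FA a ∧ FA a ≤ 1 := by
    rw [key3]; exact ⟨cdf_nonneg (μ := ρA) a, cdf_le_one (μ := ρA) a⟩
  have hms : MeasurableSet {x : ℝ | cdf ρ x ≤ FA a} :=
    (isClosed_le hcontρ continuous_const).measurableSet
  rw [show {ω | Atil ω ≤ a ∧ S ω = s} = ({ω | Atil ω ≤ a} ∩ E) from rfl,
    key1 {ω | Atil ω ≤ a}, measure_congr key4,
    show {ω | cdf ρ (A ω) ≤ FA a} = A ⁻¹' {x : ℝ | cdf ρ x ≤ FA a} from rfl,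
    ← Measure.map_apply hA hms, measure_levelset_cdf ρ hcontρ hFA_mem.1 hFA_mem.2,
    ENNReal.toReal_ofReal hFA_mem.1]
end

section
/- In the discrete setup, let ζ be the randomized cdf value built from the independent uniform V, let F_A(a) := P(A ≤ a) be the marginal cdf of A and q(p) := inf{x ∈ ℝ : F_A(x) ≥ p} its quantile function on (0,1). Then the adjusted variable Ã := q(ζ) (defined arbitrarily on the null event {ζ ∈ {0,1}}) is independent of S and satisfies P(Ã ≤ a) = F_A(a) for every a ∈ ℝ. -/
open MeasureTheory ProbabilityTheory Set

lemma vol_aux (r : ℝ) : (volume (Iic r ∩ Icc (0:ℝ) 1)).toReal = max (min r 1) 0 := by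
  have h : Iic r ∩ Icc (0:ℝ) 1 = Icc 0 (min r 1) := by
    ext x; simp only [mem_inter_iff, mem_Iic, mem_Icc, le_min_iff]; tauto
  rw [h, Real.volume_Icc]
  rcases le_total (min r 1) 0 with h0 | h0
  · rw [max_eq_right h0, ENNReal.ofReal_eq_zero.mpr (by linarith), ENNReal.toReal_zero]
  · rw [max_eq_left h0, ENNReal.toReal_ofReal (by linarith)]; ring

lemma vol_aux' (r : ℝ) : (volume (Iio r ∩ Icc (0:ℝ) 1)).toReal = max (min r 1) 0 := by
  have h : volume (Iio r ∩ Icc (0:ℝ) 1) = volume (Iic r ∩ Icc (0:ℝ) 1) := by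
    have h1 : Iic r ∩ Icc (0:ℝ) 1 ⊆ (Iio r ∩ Icc (0:ℝ) 1) ∪ {r} := by
      intro x hx; rcases lt_or_eq_of_le (mem_Iic.mp hx.1) with h | h
      · exact Or.inl ⟨h, hx.2⟩
      · exact Or.inr h
    refine le_antisymm (measure_mono (inter_subset_inter_left _ Iio_subset_Iic_self)) ?_
    calc volume (Iic r ∩ Icc (0:ℝ) 1) ≤ volume ((Iio r ∩ Icc (0:ℝ) 1) ∪ {r}) := measure_mono h1
      _ ≤ volume (Iio r ∩ Icc (0:ℝ) 1) + volume ({r} : Set ℝ) := measure_union_le _ _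
      _ = volume (Iio r ∩ Icc (0:ℝ) 1) := by rw [Real.volume_singleton, add_zero]
  rw [h, vol_aux]

lemma vol_tail (c d t : ℝ) (hd : 0 < d) :
    max (min ((t-c)/d) 1) 0 * d = min t (c+d) - min t c := by
  rcases le_total t c with h | h
  · have hr : (t-c)/d ≤ 0 := by
      apply div_nonpos_of_nonpos_of_nonneg (by linarith) hd.le
    rw [max_eq_right (le_trans (min_le_left _ _) hr), zero_mul,
      min_eq_left h, min_eq_left (by linarith)]; ring
  · rcases le_total t (c+d) with h2 | h2
    · have hr0 : 0 ≤ (t-c)/d := div_nonneg (by linarith) hd.le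
      have hr1 : (t-c)/d ≤ 1 := (div_le_one hd).mpr (by linarith)
      rw [min_eq_left hr1, max_eq_left hr0, div_mul_cancel₀ _ hd.ne',
        min_eq_left h2, min_eq_right h]
    · have hr1 : 1 ≤ (t-c)/d := (one_le_div hd).mpr (by linarith)
      rw [min_eq_right hr1, max_eq_left zero_le_one, one_mul,
        min_eq_right h2, min_eq_right h]; ring

lemma vol_le (c d t : ℝ) (hd : 0 ≤ d) :
    (volume ({v : ℝ | c + v*d ≤ t} ∩ Icc (0:ℝ) 1)).toReal * d
      = min t (c+d) - min t c := by
  rcases hd.eq_or_lt with h | h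
  · rw [← h]; simp
  · have hs : {v : ℝ | c + v*d ≤ t} = Iic ((t-c)/d) := by
      ext v; simp only [mem_setOf_eq, mem_Iic, le_div_iff₀ h]; constructor <;> intro <;> linarith
    rw [hs, vol_aux, vol_tail c d t h]

lemma vol_lt (c d t : ℝ) (hd : 0 ≤ d) :
    (volume ({v : ℝ | c + v*d < t} ∩ Icc (0:ℝ) 1)).toReal * d
      = min t (c+d) - min t c := by
  rcases hd.eq_or_lt with h | h
  · rw [← h]; simp
  · have hs : {v : ℝ | c + v*d < t} = Iio ((t-c)/d) := by
      ext v; simp only [mem_setOf_eq, mem_Iio, lt_div_iff₀ h]; constructor <;> intro <;> linarith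
    rw [hs, vol_aux', vol_tail c d t h]

lemma telescope_icc (K : ℕ) (f : ℕ → ℝ) :
    ∑ m ∈ Finset.Icc 1 K, (f m - f (m-1)) = f K - f 0 := by
  induction K with
  | zero => simp
  | succ n ih =>
      rw [Finset.sum_Icc_succ_top (Nat.succ_le_succ (Nat.zero_le n)), ih]
      simp only [Nat.add_sub_cancel]; ring

lemma toReal_measure_biUnion {Ω : Type*} [MeasurableSpace Ω] (μ : Measure Ω) [IsFiniteMeasure μ]
    {ι : Type*} (s : Finset ι) (f : ι → Set Ω)
    (hd : (s : Set ι).PairwiseDisjoint f) (hm : ∀ i ∈ s, MeasurableSet (f i)) :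
    (μ (⋃ i ∈ s, f i)).toReal = ∑ i ∈ s, (μ (f i)).toReal := by
  rw [measure_biUnion_finset hd hm, ENNReal.toReal_sum (fun i _ => measure_ne_top μ _)]

/-- Discrete-variable MQ-adjustment: the adjusted variable `Ã = q(ζ)`, where `ζ` is
the randomized cdf value and `q` the marginal quantile function (with `Ã` defined
arbitrarily on the null event `{ζ ∉ (0,1)}`), is independent of the sensitive
attribute `S` and has the same marginal distribution as `A`. -/
theorem discrete_mq_adjustment_independent_and_distribution_preserving
    {Ω : Type*} [MeasurableSpace Ω] (μ : Measure Ω) [IsProbabilityMeasure μ]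
    {𝓢 : Type*} [Fintype 𝓢] [MeasurableSpace 𝓢] [MeasurableSingletonClass 𝓢]
    (S : Ω → 𝓢) (hS : Measurable S)
    (hpos : ∀ s : 𝓢, μ {ω | S ω = s} ≠ 0)
    (K : ℕ) (hK : 1 ≤ K) (a : ℕ → ℝ)
    (ha : StrictMonoOn a (Set.Icc 1 K))
    (A : Ω → ℝ) (hA : Measurable A)
    (hAval : ∀ ω, ∃ m ∈ Finset.Icc 1 K, A ω = a m)
    (c : 𝓢 → ℕ → ℝ)
    (hc0 : ∀ s : 𝓢, c s 0 = 0)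
    (hc : ∀ (s : 𝓢), ∀ m ∈ Finset.Icc 1 K,
      c s m = (μ {ω | A ω ≤ a m ∧ S ω = s}).toReal / (μ {ω | S ω = s}).toReal)
    (V : Ω → ℝ) (hV : Measurable V)
    (hVunif : μ.map V = volume.restrict (Set.Icc (0:ℝ) 1))
    (hVindep : IndepFun V (fun ω => (A ω, S ω)) μ)
    (ζ : Ω → ℝ)
    (hζ : ∀ ω, ∀ m ∈ Finset.Icc 1 K, A ω = a m →
      ζ ω = c (S ω) (m - 1) + V ω * (c (S ω) m - c (S ω) (m - 1)))
    (FA : ℝ → ℝ) (hFA : ∀ x : ℝ, FA x = (μ {ω | A ω ≤ x}).toReal)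
    (q : ℝ → ℝ) (hq : ∀ p ∈ Set.Ioo (0:ℝ) 1, q p = sInf {x : ℝ | p ≤ FA x})
    (Atil : Ω → ℝ)
    (hAtil : ∀ ω, ζ ω ∈ Set.Ioo (0:ℝ) 1 → Atil ω = q (ζ ω)) :
    IndepFun Atil S μ ∧ ∀ x : ℝ, (μ {ω | Atil ω ≤ x}).toReal = FA x := by
  classical
  -- basic facts
  have hSmeas : ∀ s : 𝓢, MeasurableSet {ω | S ω = s} := fun s => hS (measurableSet_singleton s)
  have hPpos : ∀ s, 0 < (μ {ω | S ω = s}).toReal :=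
    fun s => ENNReal.toReal_pos (hpos s) (measure_ne_top μ _)
  have hamono : ∀ i j, 1 ≤ i → i ≤ j → j ≤ K → a i ≤ a j := fun i j h1 h2 h3 =>
    ha.monotoneOn ⟨h1, le_trans h2 h3⟩ ⟨le_trans h1 h2, h3⟩ h2
  have hastrict : ∀ i j, 1 ≤ i → i < j → j ≤ K → a i < a j := fun i j h1 h2 h3 =>
    ha ⟨h1, by omega⟩ ⟨by omega, h3⟩ h2
  have hAle : ∀ ω j, 1 ≤ j → j ≤ K → (A ω ≤ a j ↔ ∃ i, 1 ≤ i ∧ i ≤ j ∧ A ω = a i) := by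
    intro ω j hj1 hjK
    constructor
    · intro hle
      obtain ⟨i, hi, hAi⟩ := hAval ω
      rw [Finset.mem_Icc] at hi
      refine ⟨i, hi.1, ?_, hAi⟩
      by_contra hij
      push_neg at hij
      exact absurd (hAi ▸ hle) (not_le.mpr (hastrict j i hj1 hij hi.2))
    · rintro ⟨i, hi1, hij, hAi⟩
      rw [hAi]
      exact hamono i j hi1 hij hjK
  have hcval : ∀ s m, 1 ≤ m → m ≤ K →
      (μ {ω | A ω ≤ a m ∧ S ω = s}).toReal = c s m * (μ {ω | S ω = s}).toReal := by
    intro s m h1 h2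
    rw [hc s m (Finset.mem_Icc.mpr ⟨h1, h2⟩), div_mul_cancel₀ _ (hPpos s).ne']
  -- the "cumulative" sets
  set D : 𝓢 → ℕ → Set Ω := fun s j => {ω | (∃ i, 1 ≤ i ∧ i ≤ j ∧ A ω = a i) ∧ S ω = s} with hD
  have hDmeas : ∀ s j, MeasurableSet (D s j) := by
    intro s j
    have : D s j = (⋃ i ∈ Finset.Icc 1 j, A ⁻¹' {a i}) ∩ {ω | S ω = s} := by
      ext ω
      simp only [hD, Set.mem_setOf_eq, Set.mem_inter_iff, Set.mem_iUnion, Set.mem_preimage,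
        Set.mem_singleton_iff, Finset.mem_Icc, exists_prop]
      tauto
    rw [this]
    exact MeasurableSet.inter
      (Finset.measurableSet_biUnion _ fun i _ => hA (measurableSet_singleton _)) (hSmeas s)
  have hDval : ∀ s j, j ≤ K → (μ (D s j)).toReal = c s j * (μ {ω | S ω = s}).toReal := by
    intro s j hjK
    rcases Nat.eq_zero_or_pos j with h0 | h1
    · subst h0
      have : D s 0 = ∅ := by
        ext ω; simp only [hD, Set.mem_setOf_eq, Set.mem_empty_iff_false, iff_false]
        rintro ⟨⟨i, hi1, hi0, _⟩, _⟩; omega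
      rw [this, hc0 s, measure_empty, ENNReal.toReal_zero, zero_mul]
    · have : D s j = {ω | A ω ≤ a j ∧ S ω = s} := by
        ext ω
        simp only [hD, Set.mem_setOf_eq]
        rw [hAle ω j h1 hjK]
      rw [this, hcval s j h1 hjK]
  have hDsub : ∀ s m, D s (m-1) ⊆ D s m := by
    rintro s m ω ⟨⟨i, hi1, hile, hAi⟩, hSω⟩
    exact ⟨⟨i, hi1, by omega, hAi⟩, hSω⟩
  have hcmono : ∀ s m, m ≤ K → c s (m-1) ≤ c s m := by
    intro s m hmK
    have h1 : (μ (D s (m-1))).toReal ≤ (μ (D s m)).toReal :=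
      ENNReal.toReal_mono (measure_ne_top μ _) (measure_mono (hDsub s m))
    rw [hDval s (m-1) (by omega), hDval s m hmK] at h1
    exact le_of_mul_le_mul_right h1 (hPpos s)
  have hcellval : ∀ s m, 1 ≤ m → m ≤ K →
      (μ {ω | A ω = a m ∧ S ω = s}).toReal
        = (c s m - c s (m-1)) * (μ {ω | S ω = s}).toReal := by
    intro s m h1 hmK
    have hcell : {ω | A ω = a m ∧ S ω = s} = D s m \ D s (m-1) := by
      ext ω
      simp only [hD, Set.mem_setOf_eq, Set.mem_diff]
      constructor
      · rintro ⟨hAm, hSω⟩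
        refine ⟨⟨⟨m, h1, le_refl m, hAm⟩, hSω⟩, ?_⟩
        rintro ⟨⟨i, hi1, hile, hAi⟩, -⟩
        have : a i = a m := by rw [← hAi, hAm]
        have := ha.injOn ⟨hi1, by omega⟩ ⟨h1, hmK⟩ this
        omega
      · rintro ⟨⟨⟨i, hi1, hile, hAi⟩, hSω⟩, hnot⟩
        have him : i = m := by
          by_contra hne
          exact hnot ⟨⟨i, hi1, by omega, hAi⟩, hSω⟩
        exact ⟨him ▸ hAi, hSω⟩
    rw [hcell, measure_diff (hDsub s m) (hDmeas s (m-1)).nullMeasurableSet (measure_ne_top μ _),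
      ENNReal.toReal_sub_of_le (measure_mono (hDsub s m)) (measure_ne_top μ _),
      hDval s m hmK, hDval s (m-1) (by omega)]
    ring
  have hcK1 : ∀ s, c s K = 1 := by
    intro s
    have : {ω | A ω ≤ a K ∧ S ω = s} = {ω | S ω = s} := by
      ext ω
      simp only [Set.mem_setOf_eq, and_iff_right_iff_imp]
      intro _
      obtain ⟨i, hi, hAi⟩ := hAval ω
      rw [Finset.mem_Icc] at hi
      rw [hAi]
      exact hamono i K hi.1 hi.2 le_rfl
    rw [hc s K (Finset.mem_Icc.mpr ⟨hK, le_rfl⟩), this, div_self (hPpos s).ne']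
  -- core: conditional distribution of ζ given S = s is uniform
  have hUset : ∀ (R : ℝ → ℝ → Prop) (s : 𝓢) (t : ℝ),
      {ω | R (ζ ω) t ∧ S ω = s} =
        ⋃ m ∈ Finset.Icc 1 K,
          (V ⁻¹' {v : ℝ | R (c s (m-1) + v*(c s m - c s (m-1))) t} ∩
            (fun ω => (A ω, S ω)) ⁻¹' ({a m} ×ˢ ({s} : Set 𝓢))) := by
    intro R s t
    ext ω
    simp only [Set.mem_setOf_eq, Set.mem_iUnion, Set.mem_inter_iff, Set.mem_preimage,
      Set.mem_prod, Set.mem_singleton_iff, exists_prop]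
    constructor
    · rintro ⟨hR, hSω⟩
      obtain ⟨m, hm, hAm⟩ := hAval ω
      refine ⟨m, hm, ?_, hAm, hSω⟩
      have := hζ ω m hm hAm
      rw [hSω] at this
      rwa [← this]
    · rintro ⟨m, hm, hVω, hAm, hSω⟩
      have := hζ ω m hm hAm
      rw [hSω] at this
      rw [this]
      exact ⟨hVω, hSω⟩
  have hcore : ∀ (R : ℝ → ℝ → Prop),
      (∀ cc t : ℝ, MeasurableSet {v : ℝ | R (cc + v) t}) →
      (∀ cc d t : ℝ, 0 ≤ d →
        (volume ({v : ℝ | R (cc + v*d) t} ∩ Icc (0:ℝ) 1)).toReal * d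
          = min t (cc+d) - min t cc) →
      ∀ s t, (MeasurableSet {ω | R (ζ ω) t ∧ S ω = s}) ∧
        (0 ≤ t → t ≤ 1 →
          (μ {ω | R (ζ ω) t ∧ S ω = s}).toReal = t * (μ {ω | S ω = s}).toReal) := by
    intro R hRm hRv s t
    have hBm : ∀ cc d tt : ℝ, MeasurableSet {v : ℝ | R (cc + v*d) tt} := by
      intro cc d tt
      rcases eq_or_ne d 0 with h0 | h0
      · subst h0
        simp only [mul_zero, add_zero]
        by_cases hc : R cc tt
        · have : {_v : ℝ | R cc tt} = Set.univ := by
            ext v; simp [hc]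
          rw [this]; exact MeasurableSet.univ
        · have : {_v : ℝ | R cc tt} = ∅ := by
            ext v; simp [hc]
          rw [this]; exact MeasurableSet.empty
      · have : {v : ℝ | R (cc + v*d) tt} = (fun v : ℝ => v*d) ⁻¹' {v : ℝ | R (cc + v) tt} := by
          ext v; simp [Set.mem_preimage]
        rw [this]
        exact (measurable_id.mul_const d) (hRm cc tt)
    have hmeasm : ∀ m, MeasurableSet
        (V ⁻¹' {v : ℝ | R (c s (m-1) + v*(c s m - c s (m-1))) t} ∩
          (fun ω => (A ω, S ω)) ⁻¹' ({a m} ×ˢ ({s} : Set 𝓢))) := fun m =>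
      MeasurableSet.inter (hV (hBm _ _ _))
        ((hA.prodMk hS) ((measurableSet_singleton (a m)).prod (measurableSet_singleton s)))
    have hdisj : (↑(Finset.Icc 1 K) : Set ℕ).PairwiseDisjoint
        (fun m => V ⁻¹' {v : ℝ | R (c s (m-1) + v*(c s m - c s (m-1))) t} ∩
          (fun ω => (A ω, S ω)) ⁻¹' ({a m} ×ˢ ({s} : Set 𝓢))) := by
      intro m hm m' hm' hne
      simp only [Finset.coe_Icc, Set.mem_Icc] at hm hm'
      refine Set.disjoint_left.mpr ?_
      rintro ω ⟨-, hω1⟩ ⟨-, hω2⟩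
      simp only [Set.mem_preimage, Set.mem_prod, Set.mem_singleton_iff] at hω1 hω2
      exact hne (ha.injOn hm hm' (by rw [← hω1.1, hω2.1]))
    constructor
    · rw [hUset R s t]
      exact Finset.measurableSet_biUnion _ fun m _ => hmeasm m
    · intro ht0 ht1
      rw [hUset R s t, toReal_measure_biUnion μ _ _ hdisj (fun m _ => hmeasm m)]
      have hterm : ∀ m ∈ Finset.Icc 1 K,
          (μ (V ⁻¹' {v : ℝ | R (c s (m-1) + v*(c s m - c s (m-1))) t} ∩
            (fun ω => (A ω, S ω)) ⁻¹' ({a m} ×ˢ ({s} : Set 𝓢)))).toReal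
          = ((fun j => min t (c s j)) m - (fun j => min t (c s j)) (m-1))
              * (μ {ω | S ω = s}).toReal := by
        intro m hm
        rw [Finset.mem_Icc] at hm
        rw [hVindep.measure_inter_preimage_eq_mul _ _ (hBm _ _ _)
          ((measurableSet_singleton (a m)).prod (measurableSet_singleton s)),
          ENNReal.toReal_mul]
        have hVB : (μ (V ⁻¹' {v : ℝ | R (c s (m-1) + v*(c s m - c s (m-1))) t})).toReal
            = (volume ({v : ℝ | R (c s (m-1) + v*(c s m - c s (m-1))) t} ∩ Icc (0:ℝ) 1)).toReal := by
          rw [← Measure.map_apply hV (hBm _ _ _), hVunif, Measure.restrict_apply (hBm _ _ _)]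
        have hASpre : (fun ω => (A ω, S ω)) ⁻¹' ({a m} ×ˢ ({s} : Set 𝓢))
            = {ω | A ω = a m ∧ S ω = s} := by
          ext ω
          simp [Set.mem_preimage, Set.mem_prod]
        rw [hVB, hASpre, hcellval s m hm.1 hm.2]
        have hd : 0 ≤ c s m - c s (m-1) := by
          have := hcmono s m hm.2; linarith
        have := hRv (c s (m-1)) (c s m - c s (m-1)) t hd
        have hcd : c s (m-1) + (c s m - c s (m-1)) = c s m := by ring
        rw [hcd] at this
        calc (volume ({v : ℝ | R (c s (m-1) + v*(c s m - c s (m-1))) t} ∩ Icc (0:ℝ) 1)).toReal *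
              ((c s m - c s (m-1)) * (μ {ω | S ω = s}).toReal)
            = ((volume ({v : ℝ | R (c s (m-1) + v*(c s m - c s (m-1))) t} ∩ Icc (0:ℝ) 1)).toReal *
              (c s m - c s (m-1))) * (μ {ω | S ω = s}).toReal := by ring
          _ = (min t (c s m) - min t (c s (m-1))) * (μ {ω | S ω = s}).toReal := by rw [this]
      rw [Finset.sum_congr rfl hterm, ← Finset.sum_mul,
        telescope_icc K (fun j => min t (c s j)), hcK1 s, hc0 s,
        min_eq_left ht1, min_eq_right ht0, sub_zero]
  have hLe := hcore (· ≤ ·) (fun cc t => by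
      simpa using measurableSet_le (measurable_const.add measurable_id) measurable_const)
    (fun cc d t hd => vol_le cc d t hd)
  have hLt := hcore (· < ·) (fun cc t => by
      simpa using measurableSet_lt (measurable_const.add measurable_id) measurable_const)
    (fun cc d t hd => vol_lt cc d t hd)
  -- total distribution of ζ
  have hSdisj : ∀ (f : 𝓢 → Set Ω), (∀ s, f s ⊆ {ω | S ω = s}) →
      (↑(Finset.univ : Finset 𝓢) : Set 𝓢).PairwiseDisjoint f := by
    intro f hf s _ s' _ hne
    refine Set.disjoint_left.mpr fun ω h1 h2 => hne ?_
    rw [← hf s h1, ← hf s' h2]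
  have hsumP : ∑ s : 𝓢, (μ {ω | S ω = s}).toReal = 1 := by
    have huniv : (Set.univ : Set Ω) = ⋃ s ∈ (Finset.univ : Finset 𝓢), {ω | S ω = s} := by
      ext ω
      simp only [Set.mem_univ, Set.mem_iUnion, Set.mem_setOf_eq, true_iff, exists_prop]
      exact ⟨S ω, Finset.mem_univ _, rfl⟩
    have := toReal_measure_biUnion μ (Finset.univ : Finset 𝓢) (fun s => {ω | S ω = s})
      (hSdisj _ (fun s => le_refl _)) (fun s _ => hSmeas s)
    rw [← huniv, measure_univ, ENNReal.toReal_one] at this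
    exact this.symm
  have hTotGen : ∀ (R : ℝ → ℝ → Prop) (t : ℝ),
      (∀ s, MeasurableSet {ω | R (ζ ω) t ∧ S ω = s}) →
      (∀ s, (μ {ω | R (ζ ω) t ∧ S ω = s}).toReal = t * (μ {ω | S ω = s}).toReal) →
      (μ {ω | R (ζ ω) t}).toReal = t := by
    intro R t hmeas hval
    have huniv : {ω | R (ζ ω) t} = ⋃ s ∈ (Finset.univ : Finset 𝓢), {ω | R (ζ ω) t ∧ S ω = s} := by
      ext ω
      simp only [Set.mem_setOf_eq, Set.mem_iUnion, exists_prop]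
      exact ⟨fun h => ⟨S ω, Finset.mem_univ _, h, rfl⟩, fun ⟨s, _, h, _⟩ => h⟩
    rw [huniv, toReal_measure_biUnion μ _ _
      (hSdisj _ (fun s ω h => h.2)) (fun s _ => hmeas s)]
    simp only [hval]
    rw [← Finset.mul_sum, hsumP, mul_one]
  have hLeTot : ∀ t, 0 ≤ t → t ≤ 1 → (μ {ω | ζ ω ≤ t}).toReal = t :=
    fun t h0 h1 => hTotGen (· ≤ ·) t (fun s => (hLe s t).1) (fun s => (hLe s t).2 h0 h1)
  have hLtTot : ∀ t, 0 ≤ t → t ≤ 1 → (μ {ω | ζ ω < t}).toReal = t :=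
    fun t h0 h1 => hTotGen (· < ·) t (fun s => (hLt s t).1) (fun s => (hLt s t).2 h0 h1)
  -- the bad set is null
  have hLeTotMeas : ∀ t : ℝ, MeasurableSet {ω | ζ ω ≤ t} := by
    intro t
    have huniv : {ω | ζ ω ≤ t} = ⋃ s ∈ (Finset.univ : Finset 𝓢), {ω | ζ ω ≤ t ∧ S ω = s} := by
      ext ω
      simp only [Set.mem_setOf_eq, Set.mem_iUnion, exists_prop]
      exact ⟨fun h => ⟨S ω, Finset.mem_univ _, h, rfl⟩, fun ⟨s, _, h, _⟩ => h⟩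
    rw [huniv]
    exact Finset.measurableSet_biUnion _ fun s _ => (hLe s t).1
  have hLtTotMeas : ∀ t : ℝ, MeasurableSet {ω | ζ ω < t} := by
    intro t
    have huniv : {ω | ζ ω < t} = ⋃ s ∈ (Finset.univ : Finset 𝓢), {ω | ζ ω < t ∧ S ω = s} := by
      ext ω
      simp only [Set.mem_setOf_eq, Set.mem_iUnion, exists_prop]
      exact ⟨fun h => ⟨S ω, Finset.mem_univ _, h, rfl⟩, fun ⟨s, _, h, _⟩ => h⟩
    rw [huniv]
    exact Finset.measurableSet_biUnion _ fun s _ => (hLt s t).1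
  have hgood : μ {ω | ζ ω ∉ Set.Ioo (0:ℝ) 1} = 0 := by
    have h0 : μ {ω | ζ ω ≤ 0} = 0 := by
      have h := hLeTot 0 le_rfl zero_le_one
      rcases (ENNReal.toReal_eq_zero_iff _).mp h with h | h
      · exact h
      · exact absurd h (measure_ne_top μ _)
    have h1 : μ {ω | ζ ω < 1}ᶜ = 0 := by
      have h := (ENNReal.toReal_eq_one_iff _).mp (hLtTot 1 zero_le_one le_rfl)
      rw [measure_compl (hLtTotMeas 1) (measure_ne_top μ _), h, measure_univ, tsub_self]
    have hsub : {ω | ζ ω ∉ Set.Ioo (0:ℝ) 1} ⊆ {ω | ζ ω ≤ 0} ∪ {ω | ζ ω < 1}ᶜ := by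
      intro ω hω
      simp only [Set.mem_setOf_eq, Set.mem_Ioo, not_and_or, not_lt] at hω
      rcases hω with h | h
      · exact Or.inl h
      · exact Or.inr (by simpa using h)
    refine le_antisymm ?_ zero_le
    calc μ {ω | ζ ω ∉ Set.Ioo (0:ℝ) 1} ≤ μ ({ω | ζ ω ≤ 0} ∪ {ω | ζ ω < 1}ᶜ) := measure_mono hsub
      _ ≤ μ {ω | ζ ω ≤ 0} + μ {ω | ζ ω < 1}ᶜ := measure_union_le _ _
      _ = 0 := by rw [h0, h1, add_zero]
  have hswap : ∀ (E E' M : Set Ω),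
      (∀ ω, ζ ω ∈ Set.Ioo (0:ℝ) 1 → (ω ∈ E ↔ ω ∈ E')) → μ (E ∩ M) = μ (E' ∩ M) := by
    have key : ∀ (E E' M : Set Ω),
        (∀ ω, ζ ω ∈ Set.Ioo (0:ℝ) 1 → (ω ∈ E → ω ∈ E')) → μ (E ∩ M) ≤ μ (E' ∩ M) := by
      intro E E' M h
      have hsub : E ∩ M ⊆ (E' ∩ M) ∪ {ω | ζ ω ∉ Set.Ioo (0:ℝ) 1} := by
        intro ω ⟨hE, hM⟩
        by_cases hg : ζ ω ∈ Set.Ioo (0:ℝ) 1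
        · exact Or.inl ⟨h ω hg hE, hM⟩
        · exact Or.inr hg
      calc μ (E ∩ M) ≤ μ ((E' ∩ M) ∪ {ω | ζ ω ∉ Set.Ioo (0:ℝ) 1}) := measure_mono hsub
        _ ≤ μ (E' ∩ M) + μ {ω | ζ ω ∉ Set.Ioo (0:ℝ) 1} := measure_union_le _ _
        _ = μ (E' ∩ M) := by rw [hgood, add_zero]
    intro E E' M h
    exact le_antisymm (key E E' M fun ω hg => (h ω hg).mp) (key E' E M fun ω hg => (h ω hg).mpr)
  -- quantile function analysis
  set F : ℕ → ℝ := fun j => if j = 0 then 0 else FA (a j) with hF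
  have hFA0 : ∀ x, 0 ≤ FA x := fun x => by rw [hFA]; exact ENNReal.toReal_nonneg
  have hFA1 : ∀ x, FA x ≤ 1 := by
    intro x
    rw [hFA]
    calc (μ {ω | A ω ≤ x}).toReal ≤ (μ (Set.univ : Set Ω)).toReal :=
          ENNReal.toReal_mono (measure_ne_top μ _) (measure_mono (Set.subset_univ _))
      _ = 1 := by rw [measure_univ, ENNReal.toReal_one]
  have hFAmono : ∀ x y, x ≤ y → FA x ≤ FA y := by
    intro x y hxy
    rw [hFA, hFA]
    exact ENNReal.toReal_mono (measure_ne_top μ _)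
      (measure_mono fun ω (h : A ω ≤ x) => le_trans h hxy)
  have hFAK : FA (a K) = 1 := by
    rw [hFA]
    have : {ω | A ω ≤ a K} = Set.univ := by
      ext ω
      simp only [Set.mem_setOf_eq, Set.mem_univ, iff_true]
      obtain ⟨i, hi, hAi⟩ := hAval ω
      rw [Finset.mem_Icc] at hi
      rw [hAi]
      exact hamono i K hi.1 hi.2 le_rfl
    rw [this, measure_univ, ENNReal.toReal_one]
  have hFAlt : ∀ m, 1 ≤ m → m ≤ K → ∀ x, x < a m → FA x ≤ F (m-1) := by
    intro m h1 hmK x hx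
    rcases Nat.lt_or_ge m 2 with h2 | h2
    · -- m = 1
      have hm1 : m = 1 := by omega
      subst hm1
      have hempty : {ω | A ω ≤ x} = ∅ := by
        ext ω
        simp only [Set.mem_setOf_eq, Set.mem_empty_iff_false, iff_false, not_le]
        obtain ⟨i, hi, hAi⟩ := hAval ω
        rw [Finset.mem_Icc] at hi
        calc x < a 1 := hx
          _ ≤ a i := hamono 1 i le_rfl hi.1 hi.2
          _ = A ω := hAi.symm
      simp only [hF]
      rw [hFA, hempty, measure_empty, ENNReal.toReal_zero]
      norm_num
    · -- m ≥ 2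
      have hne : m - 1 ≠ 0 := by omega
      have hsub : {ω | A ω ≤ x} ⊆ {ω | A ω ≤ a (m-1)} := by
        intro ω (h : A ω ≤ x)
        obtain ⟨i, hi, hAi⟩ := hAval ω
        rw [Finset.mem_Icc] at hi
        have him : i ≤ m - 1 := by
          by_contra hc'
          push_neg at hc'
          have : a m ≤ a i := hamono m i h1 (by omega) hi.2
          rw [← hAi] at this
          linarith
        show A ω ≤ a (m-1)
        rw [hAi]
        exact hamono i (m-1) hi.1 him (by omega)
      simp only [hF, if_neg hne]
      rw [hFA, hFA]
      exact ENNReal.toReal_mono (measure_ne_top μ _) (measure_mono hsub)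
  have hFmono : ∀ i j, i ≤ j → j ≤ K → F i ≤ F j := by
    intro i j hij hjK
    rcases Nat.eq_zero_or_pos i with h0 | h1
    · subst h0
      simp only [hF, if_pos rfl]
      rcases Nat.eq_zero_or_pos j with h0' | h1'
      · subst h0'; simp
      · simp only [if_neg (Nat.pos_iff_ne_zero.mp h1')]
        exact hFA0 _
    · have hj1 : 1 ≤ j := le_trans h1 hij
      simp only [hF, if_neg (Nat.pos_iff_ne_zero.mp h1), if_neg (Nat.pos_iff_ne_zero.mp hj1)]
      exact hFAmono _ _ (hamono i j h1 hij hjK)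
  have hF1 : ∀ j, F j ≤ 1 := by
    intro j
    simp only [hF]
    split
    · exact zero_le_one
    · exact hFA1 _
  have hF0 : ∀ j, 0 ≤ F j := by
    intro j
    simp only [hF]
    split
    · exact le_rfl
    · exact hFA0 _
  have hqm : ∀ p, 0 < p → p < 1 →
      ∃ m, 1 ≤ m ∧ m ≤ K ∧ q p = a m ∧ F (m-1) < p ∧ p ≤ F m := by
    intro p hp0 hp1
    set T : Finset ℕ := (Finset.Icc 1 K).filter (fun m => p ≤ FA (a m)) with hT
    have hKT : K ∈ T := by
      rw [hT, Finset.mem_filter, Finset.mem_Icc]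
      exact ⟨⟨hK, le_rfl⟩, by rw [hFAK]; linarith⟩
    have hTne : T.Nonempty := ⟨K, hKT⟩
    set m := T.min' hTne with hm
    have hmT : m ∈ T := Finset.min'_mem T hTne
    rw [hT, Finset.mem_filter, Finset.mem_Icc] at hmT
    obtain ⟨⟨hm1, hmK⟩, hpm⟩ := hmT
    have hmne : m ≠ 0 := by omega
    have hFm : p ≤ F m := by simp only [hF, if_neg hmne]; exact hpm
    have hFm1 : F (m-1) < p := by
      rcases Nat.lt_or_ge m 2 with h2 | h2
      · have hm1' : m = 1 := by omega
        rw [hm1']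
        simpa [hF] using hp0
      · by_contra hcon
        push_neg at hcon
        have hmem : m - 1 ∈ T := by
          rw [hT, Finset.mem_filter, Finset.mem_Icc]
          refine ⟨⟨by omega, by omega⟩, ?_⟩
          simpa only [hF, if_neg (show m - 1 ≠ 0 by omega)] using hcon
        have := Finset.min'_le T _ hmem
        omega
    refine ⟨m, hm1, hmK, ?_, hFm1, hFm⟩
    rw [hq p ⟨hp0, hp1⟩]
    have hset : {x : ℝ | p ≤ FA x} = Set.Ici (a m) := by
      ext x
      simp only [Set.mem_setOf_eq, Set.mem_Ici]
      constructor
      · intro hpx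
        by_contra hc'
        push_neg at hc'
        have := hFAlt m hm1 hmK x hc'
        linarith
      · intro hmx
        exact le_trans hpm (hFAmono _ _ hmx)
    rw [hset, csInf_Ici]
  have hqle : ∀ p, 0 < p → p < 1 → ∀ x, (q p ≤ x ↔ p ≤ FA x) := by
    intro p hp0 hp1 x
    obtain ⟨m, hm1, hmK, hqp, hFm1, hFm⟩ := hqm p hp0 hp1
    rw [hqp]
    constructor
    · intro hmx
      calc p ≤ F m := hFm
        _ = FA (a m) := by simp only [hF, if_neg (show m ≠ 0 by omega)]
        _ ≤ FA x := hFAmono _ _ hmx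
    · intro hpx
      by_contra hc'
      push_neg at hc'
      have := hFAlt m hm1 hmK x hc'
      linarith
  have hIocU : ∀ p (m m' : ℕ), 1 ≤ m → m ≤ K → 1 ≤ m' → m' ≤ K →
      F (m-1) < p → p ≤ F m → F (m'-1) < p → p ≤ F m' → m = m' := by
    intro p m m' hm1 hmK hm'1 hm'K h1 h2 h3 h4
    by_contra hne
    rcases Nat.lt_or_ge m m' with h | h
    · have : F m ≤ F (m'-1) := hFmono m (m'-1) (by omega) (by omega)
      linarith
    · have hlt : m' < m := by omega
      have : F m' ≤ F (m-1) := hFmono m' (m-1) (by omega) (by omega)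
      linarith
  -- Ioc measure
  have hIocdiff : ∀ (s : 𝓢) (u t : ℝ), {ω | ζ ω ∈ Set.Ioc u t ∧ S ω = s}
      = {ω | ζ ω ≤ t ∧ S ω = s} \ {ω | ζ ω ≤ u ∧ S ω = s} := by
    intro s u t
    ext ω
    simp only [Set.mem_setOf_eq, Set.mem_Ioc, Set.mem_diff]
    constructor
    · rintro ⟨⟨hu, ht⟩, hs⟩
      exact ⟨⟨ht, hs⟩, fun hc' => absurd hc'.1 (not_le.mpr hu)⟩
    · rintro ⟨⟨ht, hs⟩, h⟩
      refine ⟨⟨?_, ht⟩, hs⟩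
      by_contra hle
      push_neg at hle
      exact h ⟨hle, hs⟩
  have hIocMeas : ∀ s u t, MeasurableSet {ω | ζ ω ∈ Set.Ioc u t ∧ S ω = s} := by
    intro s u t
    rw [hIocdiff]
    exact ((hLe s t).1).diff ((hLe s u).1)
  have hIoc : ∀ s u t, 0 ≤ u → u ≤ t → t ≤ 1 →
      (μ {ω | ζ ω ∈ Set.Ioc u t ∧ S ω = s}).toReal
        = (t - u) * (μ {ω | S ω = s}).toReal := by
    intro s u t h0u hut ht1
    have hsub : {ω | ζ ω ≤ u ∧ S ω = s} ⊆ {ω | ζ ω ≤ t ∧ S ω = s} :=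
      fun ω ⟨h1, h2⟩ => ⟨le_trans h1 hut, h2⟩
    rw [hIocdiff, measure_diff hsub ((hLe s u).1).nullMeasurableSet (measure_ne_top μ _),
      ENNReal.toReal_sub_of_le (measure_mono hsub) (measure_ne_top μ _),
      (hLe s t).2 (le_trans h0u hut) ht1, (hLe s u).2 h0u (le_trans hut ht1)]
    ring
  constructor
  · -- independence
    rw [indepFun_iff_measure_inter_preimage_eq_mul]
    intro B C hB hC
    set filt : Finset ℕ := (Finset.Icc 1 K).filter (fun m => a m ∈ B) with hfilt
    set TB : Set ℝ := ⋃ m ∈ filt, Set.Ioc (F (m-1)) (F m) with hTB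
    set LT : ℝ := ∑ m ∈ filt, (F m - F (m-1)) with hLT
    have hfiltmem : ∀ m ∈ filt, (1 ≤ m ∧ m ≤ K) ∧ a m ∈ B := by
      intro m hm
      rw [hfilt, Finset.mem_filter, Finset.mem_Icc] at hm
      exact hm
    have hBT : ∀ ω, ζ ω ∈ Set.Ioo (0:ℝ) 1 → (ω ∈ Atil ⁻¹' B ↔ ω ∈ ζ ⁻¹' TB) := by
      intro ω hω
      obtain ⟨m, hm1, hmK, hqp, hFm1, hFm⟩ := hqm (ζ ω) hω.1 hω.2
      simp only [Set.mem_preimage]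
      rw [hAtil ω hω, hqp]
      constructor
      · intro hmem
        have hmf : m ∈ filt := by
          rw [hfilt, Finset.mem_filter, Finset.mem_Icc]; exact ⟨⟨hm1, hmK⟩, hmem⟩
        rw [hTB]
        exact Set.mem_biUnion hmf ⟨hFm1, hFm⟩
      · intro hmem
        rw [hTB] at hmem
        simp only [Set.mem_iUnion, exists_prop] at hmem
        obtain ⟨m', hm'f, hp⟩ := hmem
        obtain ⟨⟨hm'1, hm'K⟩, hm'B⟩ := hfiltmem m' hm'f
        rw [Set.mem_Ioc] at hp
        have : m = m' := hIocU (ζ ω) m m' hm1 hmK hm'1 hm'K hFm1 hFm hp.1 hp.2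
        rw [this]
        exact hm'B
    have hTBsplit : ∀ s, ζ ⁻¹' TB ∩ {ω | S ω = s}
        = ⋃ m ∈ filt, {ω | ζ ω ∈ Set.Ioc (F (m-1)) (F m) ∧ S ω = s} := by
      intro s
      ext ω
      simp only [Set.mem_inter_iff, Set.mem_preimage, hTB, Set.mem_iUnion, exists_prop,
        Set.mem_setOf_eq]
      tauto
    have hζTmeas : ∀ s, MeasurableSet (ζ ⁻¹' TB ∩ {ω | S ω = s}) := by
      intro s
      rw [hTBsplit s]
      exact Finset.measurableSet_biUnion _ fun m _ => hIocMeas s _ _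
    have hζTs : ∀ s, (μ (ζ ⁻¹' TB ∩ {ω | S ω = s})).toReal
        = LT * (μ {ω | S ω = s}).toReal := by
      intro s
      have hdisj2 : (↑filt : Set ℕ).PairwiseDisjoint
          (fun m => {ω | ζ ω ∈ Set.Ioc (F (m-1)) (F m) ∧ S ω = s}) := by
        intro m hm m' hm' hne
        obtain ⟨⟨hm1, hmK⟩, -⟩ := hfiltmem m (Finset.mem_coe.mp hm)
        obtain ⟨⟨hm'1, hm'K⟩, -⟩ := hfiltmem m' (Finset.mem_coe.mp hm')
        refine Set.disjoint_left.mpr ?_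
        rintro ω ⟨h1, -⟩ ⟨h2, -⟩
        rw [Set.mem_Ioc] at h1 h2
        exact hne (hIocU (ζ ω) m m' hm1 hmK hm'1 hm'K h1.1 h1.2 h2.1 h2.2)
      rw [hTBsplit s, toReal_measure_biUnion μ _ _ hdisj2 (fun m _ => hIocMeas s _ _),
        hLT, Finset.sum_mul]
      refine Finset.sum_congr rfl fun m hm => ?_
      obtain ⟨⟨hm1, hmK⟩, -⟩ := hfiltmem m hm
      exact hIoc s (F (m-1)) (F m) (hF0 _) (hFmono (m-1) m (by omega) hmK) (hF1 m)
    have hswapB : ∀ M, μ (Atil ⁻¹' B ∩ M) = μ (ζ ⁻¹' TB ∩ M) :=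
      fun M => hswap _ _ M hBT
    have hcount : ∀ (C' : Set 𝓢), (μ (ζ ⁻¹' TB ∩ S ⁻¹' C')).toReal
        = LT * ∑ s ∈ Finset.univ, (if s ∈ C' then (μ {ω | S ω = s}).toReal else 0) := by
      intro C'
      have hsplit : ζ ⁻¹' TB ∩ S ⁻¹' C' = ⋃ s ∈ Finset.univ.filter (· ∈ C'),
          (ζ ⁻¹' TB ∩ {ω | S ω = s}) := by
        ext ω
        simp only [Set.mem_inter_iff, Set.mem_preimage, Set.mem_iUnion, exists_prop,
          Finset.mem_filter, Finset.mem_univ, true_and, Set.mem_setOf_eq]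
        constructor
        · rintro ⟨h1, h2⟩; exact ⟨S ω, h2, h1, rfl⟩
        · rintro ⟨s, hs, h1, h2⟩; exact ⟨h1, h2 ▸ hs⟩
      have hdisj3 : (↑(Finset.univ.filter (· ∈ C')) : Set 𝓢).PairwiseDisjoint
          (fun s => ζ ⁻¹' TB ∩ {ω | S ω = s}) := by
        intro s _ s' _ hne
        refine Set.disjoint_left.mpr ?_
        rintro ω ⟨-, h1⟩ ⟨-, h2⟩
        exact hne (by rw [← h1, ← h2])
      rw [hsplit, toReal_measure_biUnion μ _ _ hdisj3 (fun s _ => hζTmeas s)]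
      calc ∑ s ∈ Finset.univ.filter (· ∈ C'), (μ (ζ ⁻¹' TB ∩ {ω | S ω = s})).toReal
          = ∑ s ∈ Finset.univ.filter (· ∈ C'), LT * (μ {ω | S ω = s}).toReal :=
            Finset.sum_congr rfl fun s _ => hζTs s
        _ = ∑ s ∈ Finset.univ, (if s ∈ C' then LT * (μ {ω | S ω = s}).toReal else 0) :=
            Finset.sum_filter _ _
        _ = LT * ∑ s ∈ Finset.univ, (if s ∈ C' then (μ {ω | S ω = s}).toReal else 0) := by
            rw [Finset.mul_sum]
            exact Finset.sum_congr rfl fun s _ => by rw [mul_ite, mul_zero]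
    have hSC : ∀ (C' : Set 𝓢), (μ (S ⁻¹' C')).toReal
        = ∑ s ∈ Finset.univ, (if s ∈ C' then (μ {ω | S ω = s}).toReal else 0) := by
      intro C'
      have hsplit : S ⁻¹' C' = ⋃ s ∈ Finset.univ.filter (· ∈ C'), {ω | S ω = s} := by
        ext ω
        simp only [Set.mem_preimage, Set.mem_iUnion, exists_prop, Finset.mem_filter,
          Finset.mem_univ, true_and, Set.mem_setOf_eq]
        constructor
        · intro h; exact ⟨S ω, h, rfl⟩
        · rintro ⟨s, hs, h⟩; exact h ▸ hs
      rw [hsplit, toReal_measure_biUnion μ _ _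
        (fun s _ s' _ hne => Set.disjoint_left.mpr fun ω h1 h2 => hne (by rw [← h1, ← h2]))
        (fun s _ => hSmeas s)]
      exact Finset.sum_filter _ _
    have hABfull : (μ (Atil ⁻¹' B)).toReal = LT := by
      rw [← Set.inter_univ (Atil ⁻¹' B), hswapB Set.univ]
      have h := hcount Set.univ
      rw [Set.preimage_univ] at h
      simp only [Set.mem_univ, if_true] at h
      rw [hsumP, mul_one] at h
      rw [← h, Set.inter_univ]
    refine (ENNReal.toReal_eq_toReal_iff' (measure_ne_top μ _)
      (ENNReal.mul_ne_top (measure_ne_top μ _) (measure_ne_top μ _))).mp ?_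
    rw [hswapB (S ⁻¹' C), hcount C, ENNReal.toReal_mul, hABfull, hSC C]
  · -- distribution
    intro x
    have h1 : μ {ω | Atil ω ≤ x} = μ {ω | ζ ω ≤ FA x} := by
      have := hswap {ω | Atil ω ≤ x} {ω | ζ ω ≤ FA x} Set.univ (by
        intro ω hω
        rw [Set.mem_setOf_eq, Set.mem_setOf_eq, hAtil ω hω]
        exact hqle (ζ ω) hω.1 hω.2 x)
      simpa [Set.inter_univ] using this
    rw [h1, hLeTot (FA x) (hFA0 x) (hFA1 x)]
end
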